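/- arXiv:1607.07685 — 9 statements merged into one kernel-verified Lean document; each statement's English description precedes it below -/
import Mathlib

section
/- Let 1 ≤ a ≤ b ≤ M. If a function F : ℂ^M → ℂ is 𝔓_{[a,b]}-reducible, then F is also 𝔓_{[1,M]}-reducible. -/
open scoped BigOperators

/-- The cubic polynomial `P(v) = v³ + 12γv − 4β²`. -/
noncomputable def Pcub (β γ v : ℂ) : ℂ := v ^ 3 + 12 * γ * v - 4 * β ^ 2

/-- `ℙ_{[a,b]}(v) = ∏_{a ≤ j < k ≤ b} P(v_k − v_j)` (indices 1-based). -/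
noncomputable def Pprod (β γ : ℂ) (M a b : ℕ) (v : Fin M → ℂ) : ℂ :=
  ∏ j : Fin M, ∏ k : Fin M,
    if a ≤ j.val + 1 ∧ j < k ∧ k.val + 1 ≤ b then Pcub β γ (v k - v j) else 1

/- `(𝔓_{[a,b]} g)(v) = Σ_{𝔰 ∈ 𝔖_{[a,b]}} sgn(𝔰) ℙ_{[a,b]}(𝔰·v) g(𝔰·v)`: the
sum runs over permutations fixing every (1-based) index outside `[a,b]`, and
`(𝔰·v)_j = v_{𝔰(j)}`. -/
open Classical in
noncomputable def Pop (β γ : ℂ) (M a b : ℕ) (g : (Fin M → ℂ) → ℂ) (v : Fin M → ℂ) : ℂ :=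
  ∑ s : Equiv.Perm (Fin M),
    if ∀ i : Fin M, ¬ (a ≤ i.val + 1 ∧ i.val + 1 ≤ b) → s i = i then
      ((Equiv.Perm.sign s : ℤ) : ℂ) * Pprod β γ M a b (v ∘ s) * g (v ∘ s)
    else 0

/-- `g` is `𝔓_{[a,b]}`-reducible if `𝔓_{[a,b]} g ≡ 0`. -/
def PReducible (β γ : ℂ) (M a b : ℕ) (g : (Fin M → ℂ) → ℂ) : Prop :=
  ∀ v : Fin M → ℂ, Pop β γ M a b g v = 0

-- complementary product
noncomputable def Qfun (β γ : ℂ) (M a b : ℕ) (w : Fin M → ℂ) : ℂ :=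
  ∏ p ∈ Finset.univ.filter
    (fun p : Fin M × Fin M =>
      p.1 < p.2 ∧ ¬(a ≤ p.1.val + 1 ∧ p.1 < p.2 ∧ p.2.val + 1 ≤ b)),
    Pcub β γ (w p.2 - w p.1)

lemma pair_prod (β γ : ℂ) (M a b : ℕ) (u : Fin M → ℂ) :
    Pprod β γ M a b u =
      ∏ p ∈ Finset.univ.filter
        (fun p : Fin M × Fin M => a ≤ p.1.val + 1 ∧ p.1 < p.2 ∧ p.2.val + 1 ≤ b),
        Pcub β γ (u p.2 - u p.1) := by
  rw [Finset.prod_filter, ← Finset.univ_product_univ, Finset.prod_product]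
  rfl

lemma split_prod (β γ : ℂ) (M a b : ℕ) (u : Fin M → ℂ) :
    Pprod β γ M 1 M u = Pprod β γ M a b u * Qfun β γ M a b u := by
  rw [pair_prod, pair_prod, Qfun]
  have h1 : (Finset.univ.filter
      (fun p : Fin M × Fin M => 1 ≤ p.1.val + 1 ∧ p.1 < p.2 ∧ p.2.val + 1 ≤ M))
      = Finset.univ.filter (fun p : Fin M × Fin M => p.1 < p.2) := by
    apply Finset.filter_congr
    intro p _
    have := p.2.isLt
    constructor
    · exact fun h => h.2.1
    · exact fun h => ⟨Nat.le_add_left _ _, h, this⟩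
  rw [h1]
  rw [← Finset.prod_filter_mul_prod_filter_not
      (Finset.univ.filter (fun p : Fin M × Fin M => p.1 < p.2))
      (fun p : Fin M × Fin M => a ≤ p.1.val + 1 ∧ p.1 < p.2 ∧ p.2.val + 1 ≤ b)]
  rw [Finset.filter_filter, Finset.filter_filter]
  congr 1
  refine Finset.prod_congr (Finset.filter_congr fun p _ => ?_) fun _ _ => rfl
  exact ⟨fun h => h.2, fun h => ⟨h.2.1, h⟩⟩

lemma fix_mem {M a b : ℕ} (s : Equiv.Perm (Fin M))
    (hs : ∀ i : Fin M, ¬ (a ≤ i.val + 1 ∧ i.val + 1 ≤ b) → s i = i)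
    (i : Fin M) (hi : a ≤ i.val + 1 ∧ i.val + 1 ≤ b) :
    a ≤ (s i).val + 1 ∧ (s i).val + 1 ≤ b := by
  by_contra h
  have h2 : s (s i) = s i := hs _ h
  have h3 : s i = i := s.injective h2
  rw [h3] at h
  exact h hi

lemma key_lt {M a b : ℕ} (s : Equiv.Perm (Fin M))
    (hs : ∀ i : Fin M, ¬ (a ≤ i.val + 1 ∧ i.val + 1 ≤ b) → s i = i)
    (i j : Fin M) (hij : i < j) (h : ¬ (a ≤ i.val + 1 ∧ j.val + 1 ≤ b)) :
    s i < s j ∧ ¬ (a ≤ (s i).val + 1 ∧ (s j).val + 1 ≤ b) := by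
  rcases not_and_or.mp h with h1 | h2
  · -- i is below the window
    have hi : s i = i := hs i (fun c => h1 c.1)
    by_cases hj : a ≤ j.val + 1 ∧ j.val + 1 ≤ b
    · have hj' := fix_mem s hs j hj
      have : i.val < (s j).val := by omega
      refine ⟨?_, ?_⟩
      · rw [hi]; exact Fin.lt_def.mpr this
      · rw [hi]; exact fun c => h1 c.1
    · have hj' : s j = j := hs j hj
      rw [hi, hj']
      exact ⟨hij, h⟩
  · -- j is above the window
    have hj : s j = j := hs j (fun c => h2 c.2)
    by_cases hi : a ≤ i.val + 1 ∧ i.val + 1 ≤ b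
    · have hi' := fix_mem s hs i hi
      have hjb : b < j.val + 1 := by omega
      have : (s i).val < j.val := by omega
      refine ⟨?_, ?_⟩
      · rw [hj]; exact Fin.lt_def.mpr this
      · rw [hj]; exact fun c => h2 c.2
    · have hi' : s i = i := hs i hi
      rw [hi', hj]
      exact ⟨hij, h⟩

lemma Q_invariant (β γ : ℂ) (M a b : ℕ) (w : Fin M → ℂ) (s : Equiv.Perm (Fin M))
    (hs : ∀ i : Fin M, ¬ (a ≤ i.val + 1 ∧ i.val + 1 ≤ b) → s i = i) :
    Qfun β γ M a b (w ∘ s) = Qfun β γ M a b w := by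
  have hs' : ∀ i : Fin M, ¬ (a ≤ i.val + 1 ∧ i.val + 1 ≤ b) → s⁻¹ i = i := by
    intro i hi
    have := hs i hi
    conv_lhs => rw [← this]
    exact s.symm_apply_apply i
  unfold Qfun
  refine Finset.prod_nbij' (fun p => (s p.1, s p.2)) (fun p => (s⁻¹ p.1, s⁻¹ p.2))
    ?_ ?_ ?_ ?_ ?_
  · intro p hp
    simp only [Finset.mem_filter, Finset.mem_univ, true_and] at hp ⊢
    obtain ⟨hlt, hnc⟩ := hp
    have hnc' : ¬ (a ≤ p.1.val + 1 ∧ p.2.val + 1 ≤ b) := fun c => hnc ⟨c.1, hlt, c.2⟩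
    obtain ⟨l, n⟩ := key_lt s hs p.1 p.2 hlt hnc'
    exact ⟨l, fun c => n ⟨c.1, c.2.2⟩⟩
  · intro p hp
    simp only [Finset.mem_filter, Finset.mem_univ, true_and] at hp ⊢
    obtain ⟨hlt, hnc⟩ := hp
    have hnc' : ¬ (a ≤ p.1.val + 1 ∧ p.2.val + 1 ≤ b) := fun c => hnc ⟨c.1, hlt, c.2⟩
    obtain ⟨l, n⟩ := key_lt s⁻¹ hs' p.1 p.2 hlt hnc'
    exact ⟨l, fun c => n ⟨c.1, c.2.2⟩⟩
  · intro p _; simp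
  · intro p _; simp
  · intro p _; rfl

theorem stmt_1 (M : ℕ) (β γ : ℂ) (a b : ℕ) (ha : 1 ≤ a) (hab : a ≤ b) (hbM : b ≤ M)
    (F : (Fin M → ℂ) → ℂ)
    (hF : PReducible β γ M a b F) :
    PReducible β γ M 1 M F := by
  classical
  intro v
  -- the subgroup condition
  let P : Equiv.Perm (Fin M) → Prop := fun s =>
    ∀ i : Fin M, ¬ (a ≤ i.val + 1 ∧ i.val + 1 ≤ b) → s i = i
  -- full antisymmetrization term
  let T : Equiv.Perm (Fin M) → ℂ := fun τ =>
    ((Equiv.Perm.sign τ : ℤ) : ℂ) * Pprod β γ M 1 M (v ∘ τ) * F (v ∘ τ)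
  have hPop1 : Pop β γ M 1 M F v = ∑ τ : Equiv.Perm (Fin M), T τ := by
    unfold Pop
    refine Finset.sum_congr rfl fun s _ => ?_
    rw [if_pos]
    intro i hi
    exact absurd ⟨Nat.le_add_left _ _, i.isLt⟩ hi
  have hcard : 0 < (Finset.univ.filter P).card := by
    refine Finset.card_pos.mpr ⟨1, ?_⟩
    simp only [Finset.mem_filter, Finset.mem_univ, true_and]
    intro i _
    rfl
  have hmain : ((Finset.univ.filter P).card : ℂ) * Pop β γ M 1 M F v = 0 := by
    rw [hPop1]
    have step1 : ((Finset.univ.filter P).card : ℂ) * ∑ τ : Equiv.Perm (Fin M), T τ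
        = ∑ s ∈ Finset.univ.filter P, ∑ τ : Equiv.Perm (Fin M), T (τ * s) := by
      rw [Finset.sum_congr rfl (fun s _ =>
        (Fintype.sum_bijective (· * s) (Group.mulRight_bijective s)
          (fun τ => T (τ * s)) T (fun τ => rfl)))]
      rw [Finset.sum_const, nsmul_eq_mul]
    rw [step1, Finset.sum_comm]
    have inner : ∀ τ : Equiv.Perm (Fin M),
        ∑ s ∈ Finset.univ.filter P, T (τ * s)
          = ((Equiv.Perm.sign τ : ℤ) : ℂ) * Qfun β γ M a b (v ∘ τ)
              * Pop β γ M a b F (v ∘ τ) := by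
      intro τ
      rw [Finset.sum_filter]
      unfold Pop
      rw [Finset.mul_sum]
      refine Finset.sum_congr rfl fun s _ => ?_
      by_cases hs : P s
      · rw [if_pos hs, if_pos hs]
        have hcomp : v ∘ ⇑(τ * s) = (v ∘ ⇑τ) ∘ ⇑s := by
          funext i
          simp [Equiv.Perm.mul_apply]
        have hsign : ((Equiv.Perm.sign (τ * s) : ℤ) : ℂ)
            = ((Equiv.Perm.sign τ : ℤ) : ℂ) * ((Equiv.Perm.sign s : ℤ) : ℂ) := by
          rw [map_mul]
          push_cast
          ring
        show ((Equiv.Perm.sign (τ * s) : ℤ) : ℂ) * Pprod β γ M 1 M (v ∘ ⇑(τ * s))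
            * F (v ∘ ⇑(τ * s)) = _
        rw [hcomp, hsign, split_prod β γ M a b, Q_invariant β γ M a b (v ∘ ⇑τ) s hs]
        ring
      · rw [if_neg hs, if_neg hs, mul_zero]
    rw [Finset.sum_congr rfl (fun τ _ => inner τ)]
    simp [hF _]
  have hne : ((Finset.univ.filter P).card : ℂ) ≠ 0 :=
    Nat.cast_ne_zero.mpr hcard.ne'
  exact (mul_eq_zero.mp hmain).resolve_left hne
end

section
/- Let M ≥ 2 and suppose a function F : ℂ^M → ℂ admits a decomposition F(v) = Σ_{i=1}^{M−1} P(v_i − v_{i+1})·G_i(v), where each G_i : ℂ^M → ℂ is invariant under the transposition of the variables v_i and v_{i+1}. Then F is 𝔓_{[1,M]}-reducible (such an F is called 2-reducible). -/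
open scoped BigOperators

lemma Pprod_one (β γ : ℂ) (M : ℕ) (w : Fin M → ℂ) :
    Pprod β γ M 1 M w
      = ∏ x : Fin M × Fin M, if x.1 < x.2 then Pcub β γ (w x.2 - w x.1) else 1 := by
  rw [Pprod, Fintype.prod_prod_type]
  apply Finset.prod_congr rfl; intro j _
  apply Finset.prod_congr rfl; intro k _
  have hk : k.val + 1 ≤ M := k.isLt
  have : (1 ≤ j.val + 1 ∧ j < k ∧ k.val + 1 ≤ M) ↔ j < k := by
    constructor
    · tauto
    · intro h; exact ⟨Nat.le_add_left 1 _, h, hk⟩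
  exact if_congr this rfl rfl

lemma Pprod_swap (β γ : ℂ) (M : ℕ) (w : Fin M → ℂ) (p q : Fin M)
    (hpq : p.val + 1 = q.val) :
    Pprod β γ M 1 M (w ∘ Equiv.swap p q) * Pcub β γ (w q - w p)
      = Pprod β γ M 1 M w * Pcub β γ (w p - w q) := by
  have hne : p ≠ q := by
    intro h; rw [h] at hpq; omega
  set τ := Equiv.swap p q with hτ
  have h1 : Pprod β γ M 1 M (w ∘ τ)
      = ∏ x : Fin M × Fin M, if τ x.1 < τ x.2 then Pcub β γ (w x.2 - w x.1) else 1 := by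
    rw [Pprod_one]
    refine Fintype.prod_equiv (Equiv.prodCongr τ τ) _ _ (fun x => ?_)
    simp [hτ, Equiv.swap_apply_self]
  rw [h1, Pprod_one]
  have hmem1 : (p, q) ∈ (Finset.univ : Finset (Fin M × Fin M)) := Finset.mem_univ _
  have hmem2 : (q, p) ∈ (Finset.univ.erase (p, q) : Finset (Fin M × Fin M)) := by
    simp [Prod.ext_iff]
    intro h; exact (hne h.symm).elim
  have tv : ∀ x : Fin M, (τ x).val
      = if x.val = p.val then q.val else if x.val = q.val then p.val else x.val := by
    intro x
    by_cases h1 : x = p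
    · rw [h1]; simp [hτ]
    · by_cases h2 : x = q
      · rw [h2]
        simp [hτ, Fin.val_ne_of_ne (Ne.symm hne), Fin.val_ne_of_ne hne]
      · rw [hτ, Equiv.swap_apply_of_ne_of_ne h1 h2]
        simp [Fin.val_ne_of_ne h1, Fin.val_ne_of_ne h2]
  have key : ∀ x : Fin M × Fin M, x ≠ (p, q) → x ≠ (q, p) → (τ x.1 < τ x.2 ↔ x.1 < x.2) := by
    rintro ⟨j, k⟩ h1 h2
    have h1' : ¬(j.val = p.val ∧ k.val = q.val) := by
      rintro ⟨a, b⟩; exact h1 (by rw [Prod.ext_iff]; exact ⟨Fin.ext a, Fin.ext b⟩)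
    have h2' : ¬(j.val = q.val ∧ k.val = p.val) := by
      rintro ⟨a, b⟩; exact h2 (by rw [Prod.ext_iff]; exact ⟨Fin.ext a, Fin.ext b⟩)
    have hjM := j.isLt; have hkM := k.isLt
    rw [Fin.lt_def, Fin.lt_def, tv j, tv k]
    dsimp only
    split_ifs <;> omega
  rw [← Finset.mul_prod_erase Finset.univ
      (fun x : Fin M × Fin M => if x.1 < x.2 then Pcub β γ (w x.2 - w x.1) else 1) hmem1,
    ← Finset.mul_prod_erase _
      (fun x : Fin M × Fin M => if x.1 < x.2 then Pcub β γ (w x.2 - w x.1) else 1) hmem2,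
    ← Finset.mul_prod_erase Finset.univ
      (fun x : Fin M × Fin M => if τ x.1 < τ x.2 then Pcub β γ (w x.2 - w x.1) else 1) hmem1,
    ← Finset.mul_prod_erase _
      (fun x : Fin M × Fin M => if τ x.1 < τ x.2 then Pcub β γ (w x.2 - w x.1) else 1) hmem2]
  have hrest : ∀ x ∈ (Finset.univ.erase ((p, q) : Fin M × Fin M)).erase (q, p),
      (if τ x.1 < τ x.2 then Pcub β γ (w x.2 - w x.1) else 1)
        = (if x.1 < x.2 then Pcub β γ (w x.2 - w x.1) else 1) := by
    intro x hx
    rw [Finset.mem_erase, Finset.mem_erase] at hx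
    exact if_congr (key x hx.2.1 hx.1) rfl rfl
  rw [Finset.prod_congr rfl hrest]
  have hpq' : p < q := by rw [Fin.lt_def]; omega
  have hqp : ¬ (q < p) := by rw [Fin.lt_def]; omega
  have hvne : q.val ≠ p.val := by omega
  have e1 : (τ p).val = q.val := by rw [tv p]; simp
  have e2 : (τ q).val = p.val := by rw [tv q]; simp [hvne]
  have hτpq : ¬ (τ p < τ q) := by rw [Fin.lt_def, e1, e2]; omega
  have hτqp : τ q < τ p := by rw [Fin.lt_def, e1, e2]; omega
  simp only [if_neg hτpq, if_pos hτqp, if_pos hpq', if_neg hqp]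
  ring

theorem stmt_2 (M : ℕ) (hM : 2 ≤ M) (β γ : ℂ)
    (F : (Fin M → ℂ) → ℂ) (G : Fin (M - 1) → (Fin M → ℂ) → ℂ)
    (hGsym : ∀ i : Fin (M - 1), ∀ v : Fin M → ℂ,
      G i (v ∘ Equiv.swap (Fin.castLE (show M - 1 ≤ M by omega) i)
            (Fin.castLE (show M - 1 + 1 ≤ M by omega) i.succ)) = G i v)
    (hF : ∀ v : Fin M → ℂ,
      F v = ∑ i : Fin (M - 1),
        Pcub β γ (v (Fin.castLE (show M - 1 ≤ M by omega) i)
          - v (Fin.castLE (show M - 1 + 1 ≤ M by omega) i.succ)) * G i v) :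
    PReducible β γ M 1 M F := by
  intro v
  classical
  have hPop : Pop β γ M 1 M F v = ∑ s : Equiv.Perm (Fin M),
      ((Equiv.Perm.sign s : ℤ) : ℂ) * Pprod β γ M 1 M (v ∘ s) * F (v ∘ s) := by
    rw [Pop]
    refine Finset.sum_congr rfl (fun s _ => if_pos ?_)
    intro i hi
    exact absurd ⟨Nat.le_add_left 1 _, i.isLt⟩ hi
  rw [hPop]
  have expand : ∀ s : Equiv.Perm (Fin M),
      ((Equiv.Perm.sign s : ℤ) : ℂ) * Pprod β γ M 1 M (v ∘ s) * F (v ∘ s)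
        = ∑ i : Fin (M - 1),
            ((Equiv.Perm.sign s : ℤ) : ℂ) * Pprod β γ M 1 M (v ∘ s) *
              (Pcub β γ ((v ∘ s) (Fin.castLE (show M - 1 ≤ M by omega) i)
                - (v ∘ s) (Fin.castLE (show M - 1 + 1 ≤ M by omega) i.succ)) * G i (v ∘ s)) := by
    intro s
    rw [hF (v ∘ s), Finset.mul_sum]
  rw [Finset.sum_congr rfl (fun s _ => expand s), Finset.sum_comm]
  refine Finset.sum_eq_zero (fun i _ => ?_)
  set p : Fin M := Fin.castLE (show M - 1 ≤ M by omega) i with hp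
  set q : Fin M := Fin.castLE (show M - 1 + 1 ≤ M by omega) i.succ with hq
  have hpq : p.val + 1 = q.val := rfl
  have hne : p ≠ q := by
    intro h; rw [h] at hpq; omega
  set τ := Equiv.swap p q with hτ
  refine Finset.sum_involution (fun s _ => s * τ) ?_ ?_ (fun s _ => Finset.mem_univ _) ?_
  · intro s _
    have hw : v ∘ ⇑(s * τ) = (v ∘ ⇑s) ∘ ⇑τ := by
      ext x; simp [Equiv.Perm.mul_apply]
    rw [hw]
    have hsign : ((Equiv.Perm.sign (s * τ) : ℤ) : ℂ)
        = -((Equiv.Perm.sign s : ℤ) : ℂ) := by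
      rw [Equiv.Perm.sign_mul, Equiv.Perm.sign_swap hne]
      push_cast
      ring
    rw [hsign]
    have hG : G i ((v ∘ ⇑s) ∘ ⇑τ) = G i (v ∘ ⇑s) := hGsym i (v ∘ ⇑s)
    have hcp : ((v ∘ ⇑s) ∘ ⇑τ) p = (v ∘ ⇑s) q := by
      simp [hτ, Equiv.swap_apply_left]
    have hcq : ((v ∘ ⇑s) ∘ ⇑τ) q = (v ∘ ⇑s) p := by
      simp [hτ, Equiv.swap_apply_right]
    rw [hG, hcp, hcq]
    have hkey := Pprod_swap β γ M (v ∘ ⇑s) p q hpq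
    rw [← hτ] at hkey
    linear_combination (-(((Equiv.Perm.sign s : ℤ) : ℂ) * G i (v ∘ ⇑s))) * hkey
  · intro s _ _ h
    have h' : s * τ = s := h
    apply hne
    have h1 : τ = 1 := mul_left_cancel (a := s) (by rw [mul_one, h'])
    have : τ p = p := by rw [h1]; rfl
    rw [hτ, Equiv.swap_apply_left] at this
    exact this.symm
  · intro s _
    show s * τ * τ = s
    rw [mul_assoc, hτ, Equiv.swap_mul_self, mul_one]
end

section
/- Let M ≥ 3 and 1 ≤ i ≤ M − 2. Then the function v ↦ v_i − 2v_{i+1} + v_{i+2} on ℂ^M is 𝔓_{[1,M]}-reducible. -/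
open scoped BigOperators

/-! `𝔓_{[1,M]}` is an antisymmetrization, so right translation by a permutation only multiplies
it by a sign; averaging over the six permutations of the consecutive indices `i - 1, i, i + 1`
leaves, for each fixed vector, an alternating sum over these six permutations. In it the factors
of `ℙ_{[1,M]}` that involve at most one of the three indices are merely permuted among
themselves (this is where consecutiveness is used), so they factor out, and what remains is a
polynomial identity in three variables. -/

open Finset Equiv

section Antisymmetrization

variable {α β R : Type*} [Fintype α] [DecidableEq α] [CommRing R]

/-- Each right translate of an antisymmetrization is the antisymmetrization itself, up to the
sign of the translating permutation. -/
theorem sum_sign_mul_comp_eq_zero_of_family [NoZeroSMulDivisors ℕ R] {ι : Type*} [Fintype ι]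
    [Nonempty ι] (σ : ι → Perm α) (f : (α → β) → R)
    (hf : ∀ u, ∑ k, ((Perm.sign (σ k) : ℤ) : R) * f (u ∘ σ k) = 0) (v : α → β) :
    ∑ s : Perm α, ((Perm.sign s : ℤ) : R) * f (v ∘ s) = 0 := by
  set S := ∑ s : Perm α, ((Perm.sign s : ℤ) : R) * f (v ∘ s)
  have htranslate : ∀ k, S = ∑ s : Perm α,
      ((Perm.sign s : ℤ) : R) * (((Perm.sign (σ k) : ℤ) : R) * f ((v ∘ s) ∘ σ k)) := by
    intro k
    refine (Fintype.sum_equiv (Equiv.mulRight (σ k)) _ _ fun s => ?_).symm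
    simp only [coe_mulRight, Perm.coe_mul, map_mul, Units.val_mul, Int.cast_mul]
    rw [mul_assoc, Function.comp_assoc]
  have hcard : Fintype.card ι • S = 0 := by
    rw [← Finset.card_univ, ← Finset.sum_const, Finset.sum_congr rfl fun k _ => htranslate k,
      Finset.sum_comm]
    simp only [← Finset.mul_sum, hf, mul_zero, Finset.sum_const_zero]
  exact (smul_eq_zero.mp hcard).resolve_left Fintype.card_ne_zero

end Antisymmetrization

section OrderedPairs

variable {α R : Type*} {T : Set α} {σ : Perm α}

theorem Equiv.Perm.apply_mem_iff_of_forall_not_mem (hσ : ∀ x ∉ T, σ x = x) {x : α} :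
    σ x ∈ T ↔ x ∈ T := by
  refine ⟨fun hσx => ?_, fun hx => ?_⟩
  · by_contra hxT
    exact hxT (by rwa [hσ x hxT] at hσx)
  · by_contra hσxT
    exact hσxT (by rwa [σ.injective (hσ _ hσxT)])

theorem Equiv.Perm.inv_apply_of_forall_not_mem (hσ : ∀ x ∉ T, σ x = x) :
    ∀ x ∉ T, σ⁻¹ x = x :=
  fun x hx => Perm.inv_eq_iff_eq.mpr (hσ x hx).symm

theorem Equiv.Perm.apply_lt_apply_of_ordConnected [LinearOrder α] (hT : T.OrdConnected)
    (hσ : ∀ x ∉ T, σ x = x) {x y : α} (hxy : x < y) (hxyT : ¬(x ∈ T ∧ y ∈ T)) :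
    σ x < σ y := by
  by_cases hx : x ∈ T
  · have hy : y ∉ T := fun hy => hxyT ⟨hx, hy⟩
    rw [hσ y hy]
    by_contra! hle
    exact hy (hT.out hx ((Perm.apply_mem_iff_of_forall_not_mem hσ).mpr hx) ⟨hxy.le, hle⟩)
  · rw [hσ x hx]
    by_cases hy : y ∈ T
    · by_contra! hle
      exact hx (hT.out ((Perm.apply_mem_iff_of_forall_not_mem hσ).mpr hy) hy ⟨hle, hxy.le⟩)
    · rwa [hσ y hy]

theorem prod_lt_pairs_not_both_mem_perm [LinearOrder α] [Fintype α] [CommMonoid R]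
    [DecidablePred (· ∈ T)] (hT : T.OrdConnected) (hσ : ∀ x ∉ T, σ x = x) (f : α → α → R) :
    ∏ p ∈ univ.filter (fun p : α × α => p.1 < p.2 ∧ ¬(p.1 ∈ T ∧ p.2 ∈ T)), f (σ p.1) (σ p.2) =
      ∏ p ∈ univ.filter (fun p : α × α => p.1 < p.2 ∧ ¬(p.1 ∈ T ∧ p.2 ∈ T)), f p.1 p.2 := by
  refine Finset.prod_equiv (σ.prodCongr σ) (fun p => ?_) fun p _ => rfl
  have hσinv := Perm.inv_apply_of_forall_not_mem hσ
  simp only [mem_filter, mem_univ, true_and, prodCongr_apply, Prod.map_fst, Prod.map_snd,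
    Perm.apply_mem_iff_of_forall_not_mem hσ]
  refine ⟨fun ⟨hlt, hnot⟩ => ⟨Perm.apply_lt_apply_of_ordConnected hT hσ hlt hnot, hnot⟩,
    fun ⟨hlt, hnot⟩ => ⟨?_, hnot⟩⟩
  have hnot' : ¬(σ p.1 ∈ T ∧ σ p.2 ∈ T) := by
    simpa only [Perm.apply_mem_iff_of_forall_not_mem hσ] using hnot
  simpa using Perm.apply_lt_apply_of_ordConnected hT hσinv hlt hnot'

end OrderedPairs

theorem Pop_one_eq_sum (β γ : ℂ) (M : ℕ) (g : (Fin M → ℂ) → ℂ) (v : Fin M → ℂ) :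
    Pop β γ M 1 M g v = ∑ s : Perm (Fin M),
      ((Perm.sign s : ℤ) : ℂ) * (Pprod β γ M 1 M (v ∘ s) * g (v ∘ s)) := by
  refine Finset.sum_congr rfl fun s _ => ?_
  rw [if_pos fun j hj => absurd ⟨Nat.le_add_left 1 _, j.isLt⟩ hj, mul_assoc]

theorem Pprod_one_eq_prod_lt_pairs (β γ : ℂ) (M : ℕ) (u : Fin M → ℂ) :
    Pprod β γ M 1 M u =
      ∏ p ∈ univ.filter (fun p : Fin M × Fin M => p.1 < p.2), Pcub β γ (u p.2 - u p.1) := by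
  rw [Pprod, ← Finset.prod_product', Finset.prod_filter, ← Finset.univ_product_univ]
  refine Finset.prod_congr rfl fun p _ => ?_
  simp only [Nat.le_add_left, show (p.2 : ℕ) + 1 ≤ M from p.2.isLt, true_and, and_true]

section ThreeConsecutive

variable {M : ℕ} {a b c : Fin M}

theorem filter_lt_pairs_both_mem_Icc (hab : (a : ℕ) + 1 = b) (hbc : (b : ℕ) + 1 = c) :
    univ.filter (fun p : Fin M × Fin M =>
        p.1 < p.2 ∧ p.1 ∈ Set.Icc a c ∧ p.2 ∈ Set.Icc a c) = {(a, b), (a, c), (b, c)} := by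
  ext p
  simp only [mem_filter, mem_univ, true_and, Set.mem_Icc, mem_insert, mem_singleton,
    Prod.ext_iff, Fin.ext_iff, Fin.lt_def, Fin.le_def]
  omega

theorem Pprod_one_comp_perm_eq (β γ : ℂ) (hab : (a : ℕ) + 1 = b) (hbc : (b : ℕ) + 1 = c)
    (u : Fin M → ℂ) {σ : Perm (Fin M)} (hσ : ∀ x ∉ Set.Icc a c, σ x = x) :
    Pprod β γ M 1 M (u ∘ σ) =
      (∏ p ∈ univ.filter (fun p : Fin M × Fin M =>
          p.1 < p.2 ∧ ¬(p.1 ∈ Set.Icc a c ∧ p.2 ∈ Set.Icc a c)), Pcub β γ (u p.2 - u p.1)) *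
        (Pcub β γ (u (σ b) - u (σ a)) * Pcub β γ (u (σ c) - u (σ a)) *
          Pcub β γ (u (σ c) - u (σ b))) := by
  rw [Pprod_one_eq_prod_lt_pairs, ← Finset.prod_filter_mul_prod_filter_not _
    (fun p : Fin M × Fin M => p.1 ∈ Set.Icc a c ∧ p.2 ∈ Set.Icc a c), Finset.filter_filter,
    Finset.filter_filter, mul_comm, filter_lt_pairs_both_mem_Icc hab hbc]
  have hne : (a, b) ∉ ({(a, c), (b, c)} : Finset _) ∧ (a, c) ∉ ({(b, c)} : Finset _) := by
    simp only [mem_insert, mem_singleton, Prod.ext_iff, Fin.ext_iff]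
    omega
  rw [Finset.prod_insert hne.1, Finset.prod_insert hne.2, Finset.prod_singleton]
  simp only [Function.comp_apply]
  rw [prod_lt_pairs_not_both_mem_perm Set.ordConnected_Icc hσ fun x y => Pcub β γ (u y - u x)]
  ring

def permsOfThree (a b c : Fin M) : Fin 6 → Perm (Fin M) :=
  ![1, swap a b, swap b c, swap a c, swap a b * swap b c, swap b c * swap a b]

theorem Pcub_alternating_sum_eq_zero (β γ x y z : ℂ) :
    Pcub β γ (y - x) * Pcub β γ (z - x) * Pcub β γ (z - y) * (x - 2 * y + z)
    - Pcub β γ (x - y) * Pcub β γ (z - y) * Pcub β γ (z - x) * (y - 2 * x + z)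
    - Pcub β γ (z - x) * Pcub β γ (y - x) * Pcub β γ (y - z) * (x - 2 * z + y)
    - Pcub β γ (y - z) * Pcub β γ (x - z) * Pcub β γ (x - y) * (z - 2 * y + x)
    + Pcub β γ (z - y) * Pcub β γ (x - y) * Pcub β γ (x - z) * (y - 2 * z + x)
    + Pcub β γ (x - z) * Pcub β γ (y - z) * Pcub β γ (y - x) * (z - 2 * x + y) = 0 := by
  simp only [Pcub]
  ring

theorem sum_permsOfThree_sign_mul_Pprod_eq_zero (β γ : ℂ) (hab : (a : ℕ) + 1 = b)
    (hbc : (b : ℕ) + 1 = c) (u : Fin M → ℂ) :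
    ∑ k, ((Perm.sign (permsOfThree a b c k) : ℤ) : ℂ) *
      (Pprod β γ M 1 M (u ∘ permsOfThree a b c k) *
        ((u ∘ permsOfThree a b c k) a - 2 * (u ∘ permsOfThree a b c k) b +
          (u ∘ permsOfThree a b c k) c)) = 0 := by
  have hab' : a ≠ b := fun h => by simp [h] at hab
  have hbc' : b ≠ c := fun h => by simp [h] at hbc
  have hac' : a ≠ c := fun h => by rw [h] at hab; omega
  have hfix : ∀ k x, x ∉ Set.Icc a c → permsOfThree a b c k x = x := by
    intro k x hx
    have hxa : x ≠ a := by rintro rfl; exact hx ⟨le_rfl, Fin.le_def.mpr (by omega)⟩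
    have hxb : x ≠ b := by
      rintro rfl
      exact hx ⟨Fin.le_def.mpr (by omega), Fin.le_def.mpr (by omega)⟩
    have hxc : x ≠ c := by rintro rfl; exact hx ⟨Fin.le_def.mpr (by omega), le_rfl⟩
    fin_cases k <;>
      simp [permsOfThree, swap_apply_of_ne_of_ne, hxa, hxb, hxc]
  simp only [fun k => Pprod_one_comp_perm_eq β γ hab hbc u (hfix k)]
  generalize (∏ p ∈ univ.filter (fun p : Fin M × Fin M =>
      p.1 < p.2 ∧ ¬(p.1 ∈ Set.Icc a c ∧ p.2 ∈ Set.Icc a c)), Pcub β γ (u p.2 - u p.1)) = C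
  simp only [permsOfThree, Function.comp_apply, Fin.sum_univ_six, Fin.isValue,
    Matrix.cons_val_zero, Matrix.cons_val_one, Matrix.cons_val, Perm.coe_one, Perm.coe_mul, id_eq,
    Perm.sign_one, Perm.sign_mul, Perm.sign_swap', hab', hbc', hac', hab'.symm, hbc'.symm,
    hac'.symm, ↓reduceIte, Units.val_one, Units.val_neg, Int.reduceNeg, Int.cast_one,
    Int.cast_neg, swap_apply_left, swap_apply_right, ne_eq, not_false_eq_true,
    swap_apply_of_ne_of_ne, one_mul, neg_mul, mul_neg, mul_one, neg_neg]
  linear_combination C * Pcub_alternating_sum_eq_zero β γ (u a) (u b) (u c)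

end ThreeConsecutive

theorem stmt_4 (M : ℕ) (β γ : ℂ) (i : ℕ) (hi1 : 1 ≤ i) (hi2 : i ≤ M - 2) :
    PReducible β γ M 1 M (fun v : Fin M → ℂ =>
      v ⟨i - 1, by omega⟩ - 2 * v ⟨i, by omega⟩ + v ⟨i + 1, by omega⟩) := by
  intro v
  rw [Pop_one_eq_sum]
  exact sum_sign_mul_comp_eq_zero_of_family
    (permsOfThree ⟨i - 1, by omega⟩ ⟨i, by omega⟩ ⟨i + 1, by omega⟩)
    (fun w => Pprod β γ M 1 M w *
      (w ⟨i - 1, by omega⟩ - 2 * w ⟨i, by omega⟩ + w ⟨i + 1, by omega⟩))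
    (sum_permsOfThree_sign_mul_Pprod_eq_zero β γ (Nat.sub_add_cancel hi1) rfl) v
end

section
/- Let M ≥ 3 and suppose a function F : ℂ^M → ℂ admits a decomposition F(v) = Σ_{i=1}^{M−2} (v_i − 2v_{i+1} + v_{i+2})·J_i(v), where each J_i : ℂ^M → ℂ is invariant under every permutation of the three variables v_i, v_{i+1}, v_{i+2}. Then F is 𝔓_{[1,M]}-reducible (such an F is called 3-reducible). -/
open scoped BigOperators

abbrev bT (a0 : ℕ) {M : ℕ} (j : Fin M) : Prop :=
  j.val = a0 ∨ j.val = a0 + 1 ∨ j.val = a0 + 2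

noncomputable def Qc (β γ a b c : ℂ) : ℂ :=
  Pcub β γ (b - a) * (Pcub β γ (c - a) * Pcub β γ (c - b))

lemma core (β γ a b c : ℂ) :
    Qc β γ a b c * (a-2*b+c) - Qc β γ b a c * (b-2*a+c) - Qc β γ a c b * (a-2*c+b)
    - Qc β γ c b a * (c-2*b+a) + Qc β γ b c a * (b-2*c+a) + Qc β γ c a b * (c-2*a+b) = 0 := by
  simp only [Qc, Pcub]; ring

lemma Pprod_eq (β γ : ℂ) (M : ℕ) (w : Fin M → ℂ) :
    Pprod β γ M 1 M w
      = ∏ p : Fin M × Fin M, if p.1 < p.2 then Pcub β γ (w p.2 - w p.1) else 1 := by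
  rw [Pprod, ← Fintype.prod_prod_type']
  refine Finset.prod_congr rfl fun p _ => ?_
  by_cases h : p.1 < p.2
  · rw [if_pos ⟨Nat.le_add_left 1 _, h, p.2.isLt⟩, if_pos h]
  · rw [if_neg (fun hc => h hc.2.1), if_neg h]

lemma prod_nonT (β γ : ℂ) (M a0 : ℕ) (τ : Equiv.Perm (Fin M))
    (hfix : ∀ j, ¬ bT a0 j → τ j = j) (w : Fin M → ℂ) :
    (∏ p : Fin M × Fin M, if p.1 < p.2 ∧ ¬(bT a0 p.1 ∧ bT a0 p.2)
        then Pcub β γ (w (τ p.2) - w (τ p.1)) else 1)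
    = ∏ p : Fin M × Fin M, if p.1 < p.2 ∧ ¬(bT a0 p.1 ∧ bT a0 p.2)
        then Pcub β γ (w p.2 - w p.1) else 1 := by
  have hT : ∀ j, bT a0 (τ j) ↔ bT a0 j := by
    intro j
    constructor
    · intro h
      by_contra hn
      rw [hfix j hn] at h
      exact hn h
    · intro h
      by_contra hn
      have h2 := hfix (τ j) hn
      have := τ.injective h2
      rw [this] at hn
      exact hn h
  have horder : ∀ j k : Fin M, ¬(bT a0 j ∧ bT a0 k) → (τ j < τ k ↔ j < k) := by
    intro j k hnb
    by_cases hj : bT a0 j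
    · have hk : ¬ bT a0 k := fun h => hnb ⟨hj, h⟩
      rw [hfix k hk]
      have h1 := (hT j).mpr hj
      simp only [bT, Fin.lt_def] at *
      omega
    · rw [hfix j hj]
      by_cases hk : bT a0 k
      · have h1 := (hT k).mpr hk
        simp only [bT, Fin.lt_def] at *
        omega
      · rw [hfix k hk]
  rw [← Equiv.prod_comp (Equiv.prodCongr τ τ)
    (fun p : Fin M × Fin M => if p.1 < p.2 ∧ ¬(bT a0 p.1 ∧ bT a0 p.2)
      then Pcub β γ (w p.2 - w p.1) else 1)]
  refine Finset.prod_congr rfl fun p _ => ?_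
  simp only [Equiv.prodCongr_apply, Prod.map_fst, Prod.map_snd]
  by_cases hb : bT a0 p.1 ∧ bT a0 p.2
  · rw [if_neg (by tauto), if_neg (by rw [hT, hT]; tauto)]
  · have hiff := horder p.1 p.2 hb
    by_cases h1 : p.1 < p.2
    · rw [if_pos ⟨h1, hb⟩, if_pos ⟨hiff.mpr h1, by rw [hT, hT]; tauto⟩]
    · rw [if_neg (by tauto), if_neg (fun hc => h1 (hiff.mp hc.1))]

lemma prod_bothT (M a0 : ℕ) (i₀ i₁ i₂ : Fin M)
    (hv0 : i₀.val = a0) (hv1 : i₁.val = a0 + 1) (hv2 : i₂.val = a0 + 2)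
    (g : Fin M → Fin M → ℂ) :
    (∏ p : Fin M × Fin M, if p.1 < p.2 ∧ (bT a0 p.1 ∧ bT a0 p.2) then g p.1 p.2 else 1)
    = g i₀ i₁ * (g i₀ i₂ * g i₁ i₂) := by
  rw [← Finset.prod_filter]
  have hset : (Finset.univ.filter fun p : Fin M × Fin M =>
      p.1 < p.2 ∧ (bT a0 p.1 ∧ bT a0 p.2)) = {(i₀, i₁), (i₀, i₂), (i₁, i₂)} := by
    ext p
    simp only [Finset.mem_filter, Finset.mem_univ, true_and, Finset.mem_insert,
      Finset.mem_singleton, Prod.ext_iff, Fin.lt_def, Fin.ext_iff, bT, hv0, hv1, hv2]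
    omega
  rw [hset]
  rw [Finset.prod_insert (by
      simp only [Finset.mem_insert, Finset.mem_singleton, Prod.ext_iff, Fin.ext_iff,
        hv0, hv1, hv2]
      omega),
    Finset.prod_insert (by
      simp only [Finset.mem_singleton, Prod.ext_iff, Fin.ext_iff, hv0, hv1, hv2]
      omega),
    Finset.prod_singleton]

lemma Pfact (β γ : ℂ) (M a0 : ℕ) (i₀ i₁ i₂ : Fin M)
    (hv0 : i₀.val = a0) (hv1 : i₁.val = a0 + 1) (hv2 : i₂.val = a0 + 2)
    (τ : Equiv.Perm (Fin M)) (hfix : ∀ j, ¬ bT a0 j → τ j = j) (w : Fin M → ℂ) :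
    Pprod β γ M 1 M (w ∘ τ)
      = (∏ p : Fin M × Fin M, if p.1 < p.2 ∧ ¬(bT a0 p.1 ∧ bT a0 p.2)
          then Pcub β γ (w p.2 - w p.1) else 1)
        * Qc β γ (w (τ i₀)) (w (τ i₁)) (w (τ i₂)) := by
  rw [Pprod_eq]
  simp only [Function.comp_apply]
  have hsplit : (∏ p : Fin M × Fin M, if p.1 < p.2
        then Pcub β γ (w (τ p.2) - w (τ p.1)) else 1)
      = (∏ p : Fin M × Fin M, if p.1 < p.2 ∧ ¬(bT a0 p.1 ∧ bT a0 p.2)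
          then Pcub β γ (w (τ p.2) - w (τ p.1)) else 1)
        * ∏ p : Fin M × Fin M, if p.1 < p.2 ∧ (bT a0 p.1 ∧ bT a0 p.2)
          then Pcub β γ (w (τ p.2) - w (τ p.1)) else 1 := by
    rw [← Finset.prod_mul_distrib]
    refine Finset.prod_congr rfl fun p _ => ?_
    by_cases h1 : p.1 < p.2
    · by_cases hb : bT a0 p.1 ∧ bT a0 p.2
      · rw [if_pos h1, if_neg (by tauto), if_pos ⟨h1, hb⟩, one_mul]
      · rw [if_pos h1, if_pos ⟨h1, hb⟩, if_neg (by tauto), mul_one]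
    · rw [if_neg h1, if_neg (by tauto), if_neg (by tauto), mul_one]
  rw [hsplit, prod_nonT β γ M a0 τ hfix w,
    prod_bothT M a0 i₀ i₁ i₂ hv0 hv1 hv2 (fun j k => Pcub β γ (w (τ k) - w (τ j)))]
  rfl

lemma key (β γ : ℂ) (M a0 : ℕ) (i₀ i₁ i₂ : Fin M)
    (hv0 : i₀.val = a0) (hv1 : i₁.val = a0 + 1) (hv2 : i₂.val = a0 + 2)
    (Ji : (Fin M → ℂ) → ℂ)
    (hJ : ∀ s : Equiv.Perm (Fin M), (∀ j, j ≠ i₀ → j ≠ i₁ → j ≠ i₂ → s j = j) →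
      ∀ v : Fin M → ℂ, Ji (v ∘ s) = Ji v)
    (v : Fin M → ℂ) :
    ∑ s : Equiv.Perm (Fin M),
      ((Equiv.Perm.sign s : ℤ) : ℂ) * Pprod β γ M 1 M (v ∘ s) *
        (((v ∘ s) i₀ - 2 * (v ∘ s) i₁ + (v ∘ s) i₂) * Ji (v ∘ s)) = 0 := by
  have hne01 : i₀ ≠ i₁ := by rw [Ne, Fin.ext_iff, hv0, hv1]; omega
  have hne02 : i₀ ≠ i₂ := by rw [Ne, Fin.ext_iff, hv0, hv2]; omega
  have hne12 : i₁ ≠ i₂ := by rw [Ne, Fin.ext_iff, hv1, hv2]; omega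
  have hbt : ∀ j : Fin M, ¬ bT a0 j → j ≠ i₀ ∧ j ≠ i₁ ∧ j ≠ i₂ := by
    intro j hj
    simp only [bT, not_or] at hj
    exact ⟨fun h => hj.1 (by rw [h, hv0]), fun h => hj.2.1 (by rw [h, hv1]),
      fun h => hj.2.2 (by rw [h, hv2])⟩
  have hbt' : ∀ (τ : Equiv.Perm (Fin M)), (∀ j, ¬ bT a0 j → τ j = j) →
      ∀ j, j ≠ i₀ → j ≠ i₁ → j ≠ i₂ → τ j = j := by
    intro τ hfix j h0 h1 h2'
    refine hfix j ?_
    simp only [bT, not_or]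
    exact ⟨fun h => h0 (Fin.ext (by omega)), fun h => h1 (Fin.ext (by omega)),
      fun h => h2' (Fin.ext (by omega))⟩
  set f : Equiv.Perm (Fin M) → ℂ := fun s =>
    ((Equiv.Perm.sign s : ℤ) : ℂ) * Pprod β γ M 1 M (v ∘ s) *
      (((v ∘ s) i₀ - 2 * (v ∘ s) i₁ + (v ∘ s) i₂) * Ji (v ∘ s)) with hfdef
  show ∑ s : Equiv.Perm (Fin M), f s = 0
  set t2 := Equiv.swap i₀ i₁ with ht2
  set t3 := Equiv.swap i₁ i₂ with ht3
  set t4 := Equiv.swap i₀ i₂ with ht4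
  have hfix1 : ∀ j, ¬ bT a0 j → (1 : Equiv.Perm (Fin M)) j = j := fun j _ => rfl
  have hfix2 : ∀ j, ¬ bT a0 j → t2 j = j := fun j hj =>
    Equiv.swap_apply_of_ne_of_ne (hbt j hj).1 (hbt j hj).2.1
  have hfix3 : ∀ j, ¬ bT a0 j → t3 j = j := fun j hj =>
    Equiv.swap_apply_of_ne_of_ne (hbt j hj).2.1 (hbt j hj).2.2
  have hfix4 : ∀ j, ¬ bT a0 j → t4 j = j := fun j hj =>
    Equiv.swap_apply_of_ne_of_ne (hbt j hj).1 (hbt j hj).2.2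
  have hfix5 : ∀ j, ¬ bT a0 j → (t2 * t3) j = j := fun j hj => by
    rw [Equiv.Perm.mul_apply, hfix3 j hj, hfix2 j hj]
  have hfix6 : ∀ j, ¬ bT a0 j → (t3 * t2) j = j := fun j hj => by
    rw [Equiv.Perm.mul_apply, hfix2 j hj, hfix3 j hj]
  have hterm : ∀ (s τ : Equiv.Perm (Fin M)), (∀ j, ¬ bT a0 j → τ j = j) →
      f (s * τ)
      = ((Equiv.Perm.sign s : ℤ) : ℂ) * ((Equiv.Perm.sign τ : ℤ) : ℂ) *
        ((∏ p : Fin M × Fin M, if p.1 < p.2 ∧ ¬(bT a0 p.1 ∧ bT a0 p.2)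
            then Pcub β γ ((v ∘ s) p.2 - (v ∘ s) p.1) else 1)
          * Qc β γ ((v ∘ s) (τ i₀)) ((v ∘ s) (τ i₁)) ((v ∘ s) (τ i₂))) *
        (((v ∘ s) (τ i₀) - 2 * (v ∘ s) (τ i₁) + (v ∘ s) (τ i₂)) * Ji (v ∘ s)) := by
    intro s τ hfix
    have hco : v ∘ ⇑(s * τ) = (v ∘ s) ∘ τ := rfl
    simp only [hfdef]
    rw [hco, Pfact β γ M a0 i₀ i₁ i₂ hv0 hv1 hv2 τ hfix (v ∘ s),
      hJ τ (hbt' τ hfix) (v ∘ s)]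
    simp only [Function.comp_apply, Equiv.Perm.sign_mul, Units.val_mul, Int.cast_mul]
  -- values of the six permutations on the triple
  have e2a : t2 i₀ = i₁ := Equiv.swap_apply_left _ _
  have e2b : t2 i₁ = i₀ := Equiv.swap_apply_right _ _
  have e2c : t2 i₂ = i₂ := Equiv.swap_apply_of_ne_of_ne hne02.symm hne12.symm
  have e3a : t3 i₀ = i₀ := Equiv.swap_apply_of_ne_of_ne hne01 hne02
  have e3b : t3 i₁ = i₂ := Equiv.swap_apply_left _ _
  have e3c : t3 i₂ = i₁ := Equiv.swap_apply_right _ _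
  have e4a : t4 i₀ = i₂ := Equiv.swap_apply_left _ _
  have e4b : t4 i₁ = i₁ := Equiv.swap_apply_of_ne_of_ne hne01.symm hne12
  have e4c : t4 i₂ = i₀ := Equiv.swap_apply_right _ _
  have e5a : (t2 * t3) i₀ = i₁ := by rw [Equiv.Perm.mul_apply, e3a, e2a]
  have e5b : (t2 * t3) i₁ = i₂ := by rw [Equiv.Perm.mul_apply, e3b, e2c]
  have e5c : (t2 * t3) i₂ = i₀ := by rw [Equiv.Perm.mul_apply, e3c, e2b]
  have e6a : (t3 * t2) i₀ = i₂ := by rw [Equiv.Perm.mul_apply, e2a, e3b]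
  have e6b : (t3 * t2) i₁ = i₀ := by rw [Equiv.Perm.mul_apply, e2b, e3a]
  have e6c : (t3 * t2) i₂ = i₁ := by rw [Equiv.Perm.mul_apply, e2c, e3c]
  have sg1 : ((Equiv.Perm.sign (1 : Equiv.Perm (Fin M)) : ℤ) : ℂ) = 1 := by simp
  have sg2 : ((Equiv.Perm.sign t2 : ℤ) : ℂ) = -1 := by
    rw [ht2, Equiv.Perm.sign_swap hne01]; simp
  have sg3 : ((Equiv.Perm.sign t3 : ℤ) : ℂ) = -1 := by
    rw [ht3, Equiv.Perm.sign_swap hne12]; simp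
  have sg4 : ((Equiv.Perm.sign t4 : ℤ) : ℂ) = -1 := by
    rw [ht4, Equiv.Perm.sign_swap hne02]; simp
  have sg5 : ((Equiv.Perm.sign (t2 * t3) : ℤ) : ℂ) = 1 := by
    rw [Equiv.Perm.sign_mul, ht2, ht3, Equiv.Perm.sign_swap hne01,
      Equiv.Perm.sign_swap hne12]; simp
  have sg6 : ((Equiv.Perm.sign (t3 * t2) : ℤ) : ℂ) = 1 := by
    rw [Equiv.Perm.sign_mul, ht2, ht3, Equiv.Perm.sign_swap hne01,
      Equiv.Perm.sign_swap hne12]; simp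
  have hmain : ∀ s : Equiv.Perm (Fin M),
      f (s * 1) + f (s * t2) + f (s * t3) + f (s * t4)
        + f (s * (t2 * t3)) + f (s * (t3 * t2)) = 0 := by
    intro s
    rw [hterm s 1 hfix1, hterm s t2 hfix2, hterm s t3 hfix3, hterm s t4 hfix4,
      hterm s (t2 * t3) hfix5, hterm s (t3 * t2) hfix6,
      sg1, sg2, sg3, sg4, sg5, sg6,
      e2a, e2b, e2c, e3a, e3b, e3c, e4a, e4b, e4c, e5a, e5b, e5c, e6a, e6b, e6c]
    simp only [Equiv.Perm.one_apply]
    linear_combination (((Equiv.Perm.sign s : ℤ) : ℂ) *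
      (∏ p : Fin M × Fin M, if p.1 < p.2 ∧ ¬(bT a0 p.1 ∧ bT a0 p.2)
          then Pcub β γ ((v ∘ s) p.2 - (v ∘ s) p.1) else 1) * Ji (v ∘ s)) *
      core β γ ((v ∘ s) i₀) ((v ∘ s) i₁) ((v ∘ s) i₂)
  have hre : ∀ τ : Equiv.Perm (Fin M),
      (∑ s : Equiv.Perm (Fin M), f (s * τ)) = ∑ s : Equiv.Perm (Fin M), f s :=
    fun τ => Equiv.sum_comp (Equiv.mulRight τ) f
  have hz : ∑ s : Equiv.Perm (Fin M),
      (f (s * 1) + f (s * t2) + f (s * t3) + f (s * t4)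
        + f (s * (t2 * t3)) + f (s * (t3 * t2))) = 0 :=
    Finset.sum_eq_zero fun s _ => hmain s
  rw [Finset.sum_add_distrib, Finset.sum_add_distrib, Finset.sum_add_distrib,
    Finset.sum_add_distrib, Finset.sum_add_distrib,
    hre 1, hre t2, hre t3, hre t4, hre (t2 * t3), hre (t3 * t2)] at hz
  have h6 : (6 : ℂ) * ∑ s : Equiv.Perm (Fin M), f s = 0 := by linear_combination hz
  rcases mul_eq_zero.mp h6 with h | h
  · exact absurd h (by norm_num)
  · exact h

theorem stmt_5 (M : ℕ) (hM : 3 ≤ M) (β γ : ℂ)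
    (F : (Fin M → ℂ) → ℂ) (J : Fin (M - 2) → (Fin M → ℂ) → ℂ)
    (hJsym : ∀ i : Fin (M - 2), ∀ s : Equiv.Perm (Fin M),
      (∀ j : Fin M,
        j ≠ Fin.castLE (show M - 2 ≤ M by omega) i →
        j ≠ Fin.castLE (show M - 2 + 1 ≤ M by omega) i.succ →
        j ≠ Fin.castLE (show M - 2 + 2 ≤ M by omega) i.succ.succ → s j = j) →
      ∀ v : Fin M → ℂ, J i (v ∘ s) = J i v)
    (hF : ∀ v : Fin M → ℂ,
      F v = ∑ i : Fin (M - 2),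
        (v (Fin.castLE (show M - 2 ≤ M by omega) i)
          - 2 * v (Fin.castLE (show M - 2 + 1 ≤ M by omega) i.succ)
          + v (Fin.castLE (show M - 2 + 2 ≤ M by omega) i.succ.succ)) * J i v) :
    PReducible β γ M 1 M F := by
  intro v
  have hc : ∀ s : Equiv.Perm (Fin M), ∀ j : Fin M,
      ¬(1 ≤ j.val + 1 ∧ j.val + 1 ≤ M) → s j = j :=
    fun s j h => absurd ⟨Nat.le_add_left 1 j.val, j.isLt⟩ h
  have step1 : Pop β γ M 1 M F v
      = ∑ s : Equiv.Perm (Fin M),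
          ((Equiv.Perm.sign s : ℤ) : ℂ) * Pprod β γ M 1 M (v ∘ s) * F (v ∘ s) := by
    rw [Pop]
    exact Finset.sum_congr rfl fun s _ => if_pos (hc s)
  rw [step1]
  simp only [hF]
  simp only [Finset.mul_sum]
  rw [Finset.sum_comm]
  refine Finset.sum_eq_zero fun i _ => ?_
  exact key β γ M i.val _ _ _ (by simp) (by simp) (by simp) (J i) (hJsym i) v
end

section
/- Let P ∈ ℂ[X] be a polynomial of degree at most 3. There exists a polynomial J ∈ ℂ[x, y, z], invariant under every permutation of the variables (x, y, z), such that P(x−y) − P(y−z) = (x − 2y + z)·J(x, y, z) holds identically, if and only if the coefficient of X² in P is zero. -/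
open MvPolynomial

theorem stmt_7 (P : Polynomial ℂ) (hP : P.degree ≤ 3) :
    (∃ J : MvPolynomial (Fin 3) ℂ, J.IsSymmetric ∧
      ∀ x y z : ℂ,
        P.eval (x - y) - P.eval (y - z)
          = (x - 2 * y + z) * MvPolynomial.eval ![x, y, z] J)
    ↔ P.coeff 2 = 0 := by
  have hnd : P.natDegree < 4 := by
    have h3 : P.natDegree ≤ 3 := Polynomial.natDegree_le_iff_degree_le.mpr (by exact_mod_cast hP)
    omega
  have heval : ∀ t : ℂ, P.eval t =
      P.coeff 0 + P.coeff 1 * t + P.coeff 2 * t ^ 2 + P.coeff 3 * t ^ 3 := by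
    intro t
    rw [Polynomial.eval_eq_sum_range' hnd]
    simp [Finset.sum_range_succ]
  constructor
  · rintro ⟨J, hsym, hJ⟩
    have key : ∀ a b : ℂ, P.eval a - P.eval b = P.eval (-b) - P.eval (-a) := by
      intro a b
      have h1 := hJ a 0 (-b)
      have h2 := hJ (-b) 0 a
      have hswap : MvPolynomial.eval ![(-b), 0, a] J = MvPolynomial.eval ![a, 0, (-b)] J := by
        calc MvPolynomial.eval ![(-b), 0, a] J
            = MvPolynomial.eval ![(-b), 0, a] (rename (Equiv.swap (0 : Fin 3) 2) J) := by
              rw [hsym (Equiv.swap 0 2)]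
          _ = MvPolynomial.eval (![(-b), 0, a] ∘ (Equiv.swap (0 : Fin 3) 2)) J := by
              rw [MvPolynomial.eval_rename]
          _ = MvPolynomial.eval ![a, 0, (-b)] J := by
              have hv : (![(-b), 0, a] ∘ (Equiv.swap (0 : Fin 3) 2)) = ![a, 0, (-b)] := by
                funext i
                fin_cases i <;> simp [Equiv.swap_apply_def]
              rw [hv]
      rw [hswap] at h2
      simp only [sub_zero, zero_sub, neg_neg, mul_zero] at h1 h2
      linear_combination h1 - h2
    have h := key 1 0
    rw [heval 1, heval 0, heval (-1), heval (-0)] at h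
    linear_combination h / 2
  · intro h2
    refine ⟨MvPolynomial.C (P.coeff 1) + MvPolynomial.C (P.coeff 3) *
        (MvPolynomial.C (3/2 : ℂ) * psum (Fin 3) ℂ 2
          - MvPolynomial.C (1/2 : ℂ) * (psum (Fin 3) ℂ 1 * psum (Fin 3) ℂ 1)), ?_, ?_⟩
    · exact (MvPolynomial.IsSymmetric.C _).add
        ((MvPolynomial.IsSymmetric.C _).mul
          (((MvPolynomial.IsSymmetric.C _).mul (psum_isSymmetric _ _ 2)).sub
            ((MvPolynomial.IsSymmetric.C _).mul ((psum_isSymmetric _ _ 1).mul (psum_isSymmetric _ _ 1)))))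
    · intro x y z
      rw [heval (x - y), heval (y - z), h2]
      simp [psum, Fin.sum_univ_three]
      ring
end

section
/- Let β, γ, u₁, u₂ ∈ ℝ, set u₂₁ = u₂ − u₁ and P(v) = v³ + 12γv − 4β² (as a function ℂ → ℂ), and assume P(−i u₂₁) ≠ 0. Define λ = u₁² + u₂² + 2γ, S₂₁ = −P(i u₂₁)/P(−i u₂₁), and R = 4√2 i β u₂₁ / P(−i u₂₁). Then the two equations of the mass-2 Bethe system hold: (½(u₁+u₂)² + 8γ)·R + √2 β (1 + S₂₁) = λ R, and i(u₂−u₁) + i(u₁−u₂) S₂₁ + √2 β R = 0. -/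
theorem stmt_10 (β γ u₁ u₂ : ℝ)
    (hP : Pcub (β : ℂ) (γ : ℂ) (-(Complex.I * ((u₂ : ℂ) - (u₁ : ℂ)))) ≠ 0)
    (lam S₂₁ R : ℂ)
    (hlam : lam = (u₁ : ℂ) ^ 2 + (u₂ : ℂ) ^ 2 + 2 * (γ : ℂ))
    (hS : S₂₁ = - Pcub (β : ℂ) (γ : ℂ) (Complex.I * ((u₂ : ℂ) - (u₁ : ℂ)))
        / Pcub (β : ℂ) (γ : ℂ) (-(Complex.I * ((u₂ : ℂ) - (u₁ : ℂ)))))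
    (hR : R = 4 * (Real.sqrt 2 : ℂ) * Complex.I * (β : ℂ) * ((u₂ : ℂ) - (u₁ : ℂ))
        / Pcub (β : ℂ) (γ : ℂ) (-(Complex.I * ((u₂ : ℂ) - (u₁ : ℂ))))) :
    ((1 / 2) * ((u₁ : ℂ) + (u₂ : ℂ)) ^ 2 + 8 * (γ : ℂ)) * R
        + (Real.sqrt 2 : ℂ) * (β : ℂ) * (1 + S₂₁) = lam * R
    ∧ Complex.I * ((u₂ : ℂ) - (u₁ : ℂ)) + Complex.I * ((u₁ : ℂ) - (u₂ : ℂ)) * S₂₁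
        + (Real.sqrt 2 : ℂ) * (β : ℂ) * R = 0 := by
  set a : ℂ := (u₂ : ℂ) - (u₁ : ℂ) with ha
  set s : ℂ := (Real.sqrt 2 : ℂ) with hsdef
  have hs : s ^ 2 = 2 := by
    rw [hsdef]; norm_cast; rw [Real.sq_sqrt] <;> norm_num
  have hI : Complex.I ^ 2 = -1 := Complex.I_sq
  set D : ℂ := Pcub (β : ℂ) (γ : ℂ) (-(Complex.I * a)) with hD
  set N : ℂ := Pcub (β : ℂ) (γ : ℂ) (Complex.I * a) with hN
  have hS' : S₂₁ * D = -N := by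
    rw [hS, div_mul_cancel₀ _ hP]
  have hR' : R * D = 4 * s * Complex.I * β * a := by
    rw [hR, div_mul_cancel₀ _ hP]
  have hDN : D = (-(Complex.I * a)) ^ 3 + 12 * γ * (-(Complex.I * a)) - 4 * β ^ 2 := by rw [hD, Pcub]
  have hNN : N = (Complex.I * a) ^ 3 + 12 * γ * (Complex.I * a) - 4 * β ^ 2 := by rw [hN, Pcub]
  subst hlam
  constructor
  · apply mul_left_cancel₀ hP
    calc Pcub (β : ℂ) (γ : ℂ) (-(Complex.I * a)) *
          ((1 / 2 * ((u₁ : ℂ) + u₂) ^ 2 + 8 * γ) * R + s * β * (1 + S₂₁))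
        = D * ((1 / 2 * ((u₁ : ℂ) + u₂) ^ 2 + 8 * γ) * R + s * β * (1 + S₂₁)) := rfl
      _ = D * (((u₁ : ℂ) ^ 2 + u₂ ^ 2 + 2 * γ) * R) := by
          linear_combination (1 / 2 * ((u₁ : ℂ) + u₂) ^ 2 + 8 * γ
              - ((u₁ : ℂ) ^ 2 + u₂ ^ 2 + 2 * γ)) * hR'
            + (s * β) * hS'
            + (-2 * s * β * Complex.I * a ^ 3) * hI
            + (s * β) * hDN - (s * β) * hNN
      _ = _ := rfl
  · apply mul_left_cancel₀ hP
    calc Pcub (β : ℂ) (γ : ℂ) (-(Complex.I * a)) *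
          (Complex.I * a + Complex.I * ((u₁ : ℂ) - u₂) * S₂₁ + s * β * R) = D *
          (Complex.I * a + Complex.I * ((u₁ : ℂ) - u₂) * S₂₁ + s * β * R) := rfl
      _ = D * 0 := by
          linear_combination (Complex.I * ((u₁ : ℂ) - u₂)) * hS'
            + (s * β) * hR'
            + (4 * Complex.I * β ^ 2 * a) * hs
            + (Complex.I * a) * hDN + (Complex.I * a) * hNN
      _ = _ := rfl
end

section
/- Let β, γ, u₁, u₂ ∈ ℝ, set u₂₁ = u₂ − u₁ and P(v) = v³ + 12γv − 4β², assume P(−i u₂₁) ≠ 0, and put λ = u₁² + u₂² + 2γ, S₂₁ = −P(i u₂₁)/P(−i u₂₁), R = 4√2 i β u₂₁ / P(−i u₂₁). Define f₂ : ℝ² → ℂ by f₂(x₁,x₂) = e^{i(u₂x₁+u₁x₂)} + S₂₁ e^{i(u₁x₁+u₂x₂)} and f₁ : ℝ → ℂ by f₁(x) = R e^{i(u₁+u₂)x}. Then: (i) −∂²f₂/∂x₁² − ∂²f₂/∂x₂² + 2γ f₂ = λ f₂ at every point of ℝ²; (ii) −½ f₁''(x) + 8γ f₁(x) + √2 β f₂(x,x)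 = λ f₁(x) for every x ∈ ℝ; (iii) 2[(∂/∂x₁ − ∂/∂x₂) f₂](x,x) + 2√2 β f₁(x) = 0 for every x ∈ ℝ. -/
open Complex

lemma Pcub_add_Pcub_neg (β γ v : ℂ) : Pcub β γ v + Pcub β γ (-v) = -8 * β ^ 2 := by
  unfold Pcub; ring

lemma Pcub_sub_Pcub_neg (β γ v : ℂ) :
    Pcub β γ v - Pcub β γ (-v) = 2 * v * (v ^ 2 + 12 * γ) := by
  unfold Pcub; ring

section Coefficients

variable {β γ w S R : ℂ}

lemma jump_coefficients_eq_zero (hP : Pcub β γ (-(I * w)) ≠ 0)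
    (hSP : S * Pcub β γ (-(I * w)) = -Pcub β γ (I * w))
    (hRP : R * Pcub β γ (-(I * w)) = 4 * (Real.sqrt 2 : ℂ) * I * β * w) :
    2 * I * w * (1 - S) + 2 * (Real.sqrt 2 : ℂ) * β * R = 0 := by
  have hsqrt : (Real.sqrt 2 : ℂ) ^ 2 = 2 := by
    rw [← ofReal_pow, Real.sq_sqrt zero_le_two, ofReal_ofNat]
  refine mul_right_cancel₀ hP ?_
  linear_combination 2 * I * w * Pcub_add_Pcub_neg β γ (I * w) - 2 * I * w * hSP
    + 2 * (Real.sqrt 2 : ℂ) * β * hRP + 8 * I * β ^ 2 * w * hsqrt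

lemma bound_state_coefficients_eq_zero (hP : Pcub β γ (-(I * w)) ≠ 0)
    (hSP : S * Pcub β γ (-(I * w)) = -Pcub β γ (I * w))
    (hRP : R * Pcub β γ (-(I * w)) = 4 * (Real.sqrt 2 : ℂ) * I * β * w) :
    (6 * γ - w ^ 2 / 2) * R + (Real.sqrt 2 : ℂ) * β * (1 + S) = 0 := by
  refine mul_right_cancel₀ hP ?_
  linear_combination (-(Real.sqrt 2 : ℂ)) * β * Pcub_sub_Pcub_neg β γ (I * w)
    + (Real.sqrt 2 : ℂ) * β * hSP + (6 * γ - w ^ 2 / 2) * hRP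
    - 2 * (Real.sqrt 2 : ℂ) * β * I * w ^ 3 * I_sq

end Coefficients

lemma hasDerivAt_cexp_mul (a : ℂ) (x : ℝ) :
    HasDerivAt (fun t : ℝ => cexp (a * t)) (a * cexp (a * x)) x := by
  simpa [mul_comm] using ((ofRealCLM.hasDerivAt (x := x)).const_mul a).cexp

lemma deriv_const_mul_cexp_mul (c a : ℂ) :
    deriv (fun t : ℝ => c * cexp (a * t)) = fun t : ℝ => c * a * cexp (a * t) := by
  funext t
  exact ((hasDerivAt_cexp_mul a t).const_mul c).deriv.trans (mul_assoc _ _ _).symm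

lemma deriv_two_cexp_mul (c a d b : ℂ) :
    deriv (fun t : ℝ => c * cexp (a * t) + d * cexp (b * t))
      = fun t : ℝ => c * a * cexp (a * t) + d * b * cexp (b * t) := by
  funext t
  exact (((hasDerivAt_cexp_mul a t).const_mul c).add
    ((hasDerivAt_cexp_mul b t).const_mul d)).deriv.trans (by ring)

theorem stmt_11 (β γ u₁ u₂ : ℝ)
    (hP : Pcub (β : ℂ) (γ : ℂ) (-(Complex.I * ((u₂ : ℂ) - (u₁ : ℂ)))) ≠ 0)
    (lam S₂₁ R : ℂ)
    (hlam : lam = (u₁ : ℂ) ^ 2 + (u₂ : ℂ) ^ 2 + 2 * (γ : ℂ))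
    (hS : S₂₁ = - Pcub (β : ℂ) (γ : ℂ) (Complex.I * ((u₂ : ℂ) - (u₁ : ℂ)))
        / Pcub (β : ℂ) (γ : ℂ) (-(Complex.I * ((u₂ : ℂ) - (u₁ : ℂ)))))
    (hR : R = 4 * (Real.sqrt 2 : ℂ) * Complex.I * (β : ℂ) * ((u₂ : ℂ) - (u₁ : ℂ))
        / Pcub (β : ℂ) (γ : ℂ) (-(Complex.I * ((u₂ : ℂ) - (u₁ : ℂ)))))
    (f₂ : ℝ → ℝ → ℂ) (f₁ : ℝ → ℂ)
    (hf₂ : ∀ x₁ x₂ : ℝ, f₂ x₁ x₂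
      = Complex.exp (Complex.I * ((u₂ : ℂ) * (x₁ : ℂ) + (u₁ : ℂ) * (x₂ : ℂ)))
        + S₂₁ * Complex.exp (Complex.I * ((u₁ : ℂ) * (x₁ : ℂ) + (u₂ : ℂ) * (x₂ : ℂ))))
    (hf₁ : ∀ x : ℝ, f₁ x = R * Complex.exp (Complex.I * ((u₁ : ℂ) + (u₂ : ℂ)) * (x : ℂ))) :
    (∀ x₁ x₂ : ℝ,
      - deriv (deriv (fun s => f₂ s x₂)) x₁ - deriv (deriv (fun s => f₂ x₁ s)) x₂
        + 2 * (γ : ℂ) * f₂ x₁ x₂ = lam * f₂ x₁ x₂)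
    ∧ (∀ x : ℝ,
      - (1 / 2) * deriv (deriv f₁) x + 8 * (γ : ℂ) * f₁ x
        + (Real.sqrt 2 : ℂ) * (β : ℂ) * f₂ x x = lam * f₁ x)
    ∧ (∀ x : ℝ,
      2 * (deriv (fun s => f₂ s x) x - deriv (fun s => f₂ x s) x)
        + 2 * (Real.sqrt 2 : ℂ) * (β : ℂ) * f₁ x = 0) := by
  have hSP := div_mul_cancel₀ (-Pcub (β : ℂ) γ (I * (u₂ - u₁))) hP
  have hRP := div_mul_cancel₀ (4 * (Real.sqrt 2 : ℂ) * I * β * (u₂ - u₁)) hP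
  rw [← hS] at hSP
  rw [← hR] at hRP
  have hsep : ∀ x₁ x₂ : ℝ, f₂ x₁ x₂ = cexp (I * u₂ * x₁) * cexp (I * u₁ * x₂)
      + S₂₁ * (cexp (I * u₁ * x₁) * cexp (I * u₂ * x₂)) := by
    intro x₁ x₂
    rw [hf₂, ← exp_add, ← exp_add]
    ring_nf
  have slice₁ : ∀ x₂ : ℝ, (fun s => f₂ s x₂) = fun s : ℝ =>
      cexp (I * u₁ * x₂) * cexp (I * u₂ * s) + S₂₁ * cexp (I * u₂ * x₂) * cexp (I * u₁ * s) := by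
    intro x₂; funext s; rw [hsep]; ring
  have slice₂ : ∀ x₁ : ℝ, (fun s => f₂ x₁ s) = fun s : ℝ =>
      cexp (I * u₂ * x₁) * cexp (I * u₁ * s) + S₂₁ * cexp (I * u₁ * x₁) * cexp (I * u₂ * s) := by
    intro x₁; funext s; rw [hsep]; ring
  have hdiag : ∀ x : ℝ, cexp (I * u₁ * x) * cexp (I * u₂ * x) = cexp (I * (u₁ + u₂) * x) := by
    intro x; rw [← exp_add]; ring_nf
  refine ⟨fun x₁ x₂ => ?_, fun x => ?_, fun x => ?_⟩
  · rw [slice₁, slice₂, deriv_two_cexp_mul, deriv_two_cexp_mul, deriv_two_cexp_mul,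
      deriv_two_cexp_mul, hsep, hlam]
    linear_combination (-((u₁ : ℂ) ^ 2 + u₂ ^ 2)) * (cexp (I * u₂ * x₁) * cexp (I * u₁ * x₂)
      + S₂₁ * (cexp (I * u₁ * x₁) * cexp (I * u₂ * x₂))) * I_sq
  · rw [funext hf₁, deriv_const_mul_cexp_mul, deriv_const_mul_cexp_mul, hsep, hlam]
    linear_combination cexp (I * (u₁ + u₂) * x) * bound_state_coefficients_eq_zero hP hSP hRP
      - (1 / 2) * R * cexp (I * (u₁ + u₂) * x) * (u₁ + u₂) ^ 2 * I_sq
      + (Real.sqrt 2 : ℂ) * β * (1 + S₂₁) * hdiag x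
  · rw [slice₁, slice₂, deriv_two_cexp_mul, deriv_two_cexp_mul, hf₁]
    linear_combination cexp (I * (u₁ + u₂) * x) * jump_coefficients_eq_zero hP hSP hRP
      + 2 * I * (u₂ - u₁) * (1 - S₂₁) * hdiag x
end

section
/- Let u, κ, τ ∈ ℝ with κ ≠ 0, and suppose u³ + u(κ² + τ² − κτ) + iκτ(κ − τ) ≠ 0. For real N > 0 set θ_N = 2πu/(κN) and b_N = 2πτ/(κN), and define S_N = [sinh(θ_N/2 + iπ/N)·sinh(θ_N/2 − iπ/N + i b_N/2)·sinh(θ_N/2 − i b_N/2)] / [sinh(θ_N/2 − iπ/N)·sinh(θ_N/2 + iπ/N − i b_N/2)·sinh(θ_N/2 + i b_N/2)], using the complex hyperbolic sine. Then S_N converges, as N → ∞, to the rational function value (u³ + u(κ² + τ² − κτ) − iκτ(κ − τ)) / (u³ + u(κ² + τ² − κτ) + iκτ(κ − τ)). In particular, if κ² + τ² − κτ = −12γ and κτ(κ − τ) = 4β², the limit equals the quantised KP S-matrix (u³ − 12γu − 4iβ²)/(u³ − 12γu + 4iβ²). -/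
/-!
Every sinh argument in `S_N` has the form `z / N` with `z` independent of `N`, and
`N * sinh (z / N) → z`. Multiplying numerator and denominator by `N³` therefore turns `S_N`
into a ratio converging to `z₁ z₂ z₃ / (z₄ z₅ z₆)`. With `c = π / κ` the `zᵢ` are `c` times
`u + iκ, u - iκ + iτ, u - iτ` and `u - iκ, u + iκ - iτ, u + iτ`, whose products are the two
cubics of the limit.
-/

open Filter Topology Complex

theorem tendsto_mul_sinh_div_atTop (z : ℂ) :
    Tendsto (fun N : ℝ => (N : ℂ) * sinh (z / N)) atTop (𝓝 z) := by
  have hderiv : HasDerivAt (fun t : ℝ => sinh (z * t)) z 0 := by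
    simpa using ((hasDerivAt_id (0 : ℂ)).const_mul z).csinh.comp_ofReal
  have hslope := (hasDerivAt_iff_tendsto_slope_zero.1 hderiv).comp
    (tendsto_inv_atTop_nhdsGT_zero.mono_right (nhdsWithin_mono _ fun _ h => ne_of_gt h))
  refine hslope.congr fun N => ?_
  simp [Complex.real_smul, div_eq_mul_inv]

theorem tendsto_prod_sinh_div_prod_sinh {ι : Type*} (s : Finset ι) (a b : ι → ℂ)
    (hb : ∏ i ∈ s, b i ≠ 0) :
    Tendsto (fun N : ℝ => (∏ i ∈ s, sinh (a i / N)) / ∏ i ∈ s, sinh (b i / N)) atTop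
      (𝓝 ((∏ i ∈ s, a i) / ∏ i ∈ s, b i)) := by
  have hnum := tendsto_finsetProd s fun i _ => tendsto_mul_sinh_div_atTop (a i)
  have hden := tendsto_finsetProd s fun i _ => tendsto_mul_sinh_div_atTop (b i)
  refine (hnum.div hden hb).congr' ?_
  filter_upwards [eventually_ne_atTop 0] with N hN
  simp only [Finset.prod_mul_distrib, Finset.prod_const]
  exact mul_div_mul_left _ _ (pow_ne_zero _ (ofReal_ne_zero.2 hN))

theorem mul_mul_eq_cubic {R : Type*} [CommRing R] (u κ τ ε : R) (hε : ε ^ 2 = -1) :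
    (u + ε * κ) * (u - ε * κ + ε * τ) * (u - ε * τ)
      = u ^ 3 + u * (κ ^ 2 + τ ^ 2 - κ * τ) - ε * κ * τ * (κ - τ) := by
  linear_combination (ε * κ * τ * (κ - τ) - u * (κ ^ 2 + τ ^ 2 - κ * τ)) * hε

theorem stmt_16 (u κ τ : ℝ) (hκ : κ ≠ 0)
    (hden : (u : ℂ) ^ 3 + (u : ℂ) * ((κ : ℂ) ^ 2 + (τ : ℂ) ^ 2 - (κ : ℂ) * (τ : ℂ))
      + Complex.I * (κ : ℂ) * (τ : ℂ) * ((κ : ℂ) - (τ : ℂ)) ≠ 0) :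
    Tendsto
      (fun N : ℝ =>
        (Complex.sinh (((Real.pi * u / (κ * N) : ℝ) : ℂ) + Complex.I * ((Real.pi / N : ℝ) : ℂ))
          * Complex.sinh (((Real.pi * u / (κ * N) : ℝ) : ℂ) - Complex.I * ((Real.pi / N : ℝ) : ℂ)
              + Complex.I * ((Real.pi * τ / (κ * N) : ℝ) : ℂ))
          * Complex.sinh (((Real.pi * u / (κ * N) : ℝ) : ℂ)
              - Complex.I * ((Real.pi * τ / (κ * N) : ℝ) : ℂ)))
        / (Complex.sinh (((Real.pi * u / (κ * N) : ℝ) : ℂ) - Complex.I * ((Real.pi / N : ℝ) : ℂ))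
          * Complex.sinh (((Real.pi * u / (κ * N) : ℝ) : ℂ) + Complex.I * ((Real.pi / N : ℝ) : ℂ)
              - Complex.I * ((Real.pi * τ / (κ * N) : ℝ) : ℂ))
          * Complex.sinh (((Real.pi * u / (κ * N) : ℝ) : ℂ)
              + Complex.I * ((Real.pi * τ / (κ * N) : ℝ) : ℂ))))
      atTop
      (nhds (((u : ℂ) ^ 3 + (u : ℂ) * ((κ : ℂ) ^ 2 + (τ : ℂ) ^ 2 - (κ : ℂ) * (τ : ℂ))
          - Complex.I * (κ : ℂ) * (τ : ℂ) * ((κ : ℂ) - (τ : ℂ)))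
        / ((u : ℂ) ^ 3 + (u : ℂ) * ((κ : ℂ) ^ 2 + (τ : ℂ) ^ 2 - (κ : ℂ) * (τ : ℂ))
          + Complex.I * (κ : ℂ) * (τ : ℂ) * ((κ : ℂ) - (τ : ℂ)))))
    ∧ ∀ β γ : ℝ, κ ^ 2 + τ ^ 2 - κ * τ = -12 * γ → κ * τ * (κ - τ) = 4 * β ^ 2 →
      ((u : ℂ) ^ 3 + (u : ℂ) * ((κ : ℂ) ^ 2 + (τ : ℂ) ^ 2 - (κ : ℂ) * (τ : ℂ))
          - Complex.I * (κ : ℂ) * (τ : ℂ) * ((κ : ℂ) - (τ : ℂ)))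
        / ((u : ℂ) ^ 3 + (u : ℂ) * ((κ : ℂ) ^ 2 + (τ : ℂ) ^ 2 - (κ : ℂ) * (τ : ℂ))
          + Complex.I * (κ : ℂ) * (τ : ℂ) * ((κ : ℂ) - (τ : ℂ)))
      = ((u : ℂ) ^ 3 - 12 * (γ : ℂ) * (u : ℂ) - 4 * Complex.I * (β : ℂ) ^ 2)
        / ((u : ℂ) ^ 3 - 12 * (γ : ℂ) * (u : ℂ) + 4 * Complex.I * (β : ℂ) ^ 2) := by
  have hκ' : (κ : ℂ) ≠ 0 := ofReal_ne_zero.2 hκ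
  set c : ℂ := Real.pi / κ with hc_def
  have hc : c ^ 3 ≠ 0 := pow_ne_zero _ (div_ne_zero (ofReal_ne_zero.2 Real.pi_ne_zero) hκ')
  have hprod : ∀ x y z : ℂ, c * x * (c * y) * (c * z) = c ^ 3 * (x * y * z) := fun _ _ _ => by ring
  have hnum_factor := mul_mul_eq_cubic (u : ℂ) κ τ I I_sq
  have hden_factor : ((u : ℂ) - I * κ) * (u + I * κ - I * τ) * (u + I * τ)
      = (u : ℂ) ^ 3 + u * ((κ : ℂ) ^ 2 + (τ : ℂ) ^ 2 - κ * τ) + I * κ * τ * (κ - τ) := by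
    linear_combination mul_mul_eq_cubic (u : ℂ) κ τ (-I) (by rw [neg_sq, I_sq])
  constructor
  · have hlim := tendsto_prod_sinh_div_prod_sinh Finset.univ
      ![c * (u + I * κ), c * (u - I * κ + I * τ), c * (u - I * τ)]
      ![c * (u - I * κ), c * (u + I * κ - I * τ), c * (u + I * τ)] (by
        simpa only [Fin.prod_univ_three, Matrix.cons_val, hprod, hden_factor] using mul_ne_zero hc hden)
    simp only [Fin.prod_univ_three, Matrix.cons_val, hprod, hnum_factor, hden_factor,
      mul_div_mul_left _ _ hc] at hlim
    refine hlim.congr fun N => ?_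
    simp only [hc_def]
    push_cast
    congr 4 <;> field_simp
  · intro β γ h1 h2
    have h1' : (κ : ℂ) ^ 2 + (τ : ℂ) ^ 2 - (κ : ℂ) * τ = -12 * (γ : ℂ) := by exact_mod_cast h1
    have h2' : (κ : ℂ) * τ * ((κ : ℂ) - τ) = 4 * (β : ℂ) ^ 2 := by exact_mod_cast h2
    congr 1
    · linear_combination (u : ℂ) * h1' - I * h2'
    · linear_combination (u : ℂ) * h1' + I * h2'
end

section
/- (Factorisation, bulk part.) Suppose that for every n ≥ 1 the polynomial functions Q^{(n)} : ℂ^n → ℂ, with Q^{(1)} ≡ 1, satisfy the single-cluster bulk and jump equations: for every n ≥ 2 the function v ↦ (K̃(v) + (n³−n)γ)·Q^{(n)}(v) + β·Σ_{n₁+n₂=n, n₁,n₂≥1} √(n₁n₂n)·Q^{(n₁)}(v₁,…,v_{n₁})·Q^{(n₂)}(v_{n₁+1},…,v_n) is 𝔓_{[1,n]}-reducible on ℂ^n, and for every n₁, n₂ ≥ 1 with n₁+n₂ = n the function v ↦ V_{n₁n₂}(v)·Q^{(n₁)}(v₁,…,v_{n₁})·Q^{(n₂)}(v_{n₁+1},…,v_n)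 + V_{n₂n₁}(v)·Q^{(n₂)}(v₁,…,v_{n₂})·Q^{(n₁)}(v_{n₂+1},…,v_n) + 2n₁n₂β_{n₁n₂}·Q^{(n)}(v) is 𝔓_{[1,n]}-reducible on ℂ^n. Then for every composition m = (m₁,…,m_N) of M, with Q^m(v) = ∏_{j=1}^N Q^{(m_j)}(w_j(v)), and for every x ∈ ℝ^N, the function v ↦ [ (Σ_{j=1}^N K̃(w_j(v)) + (m_j³−m_j)γ)·Q^m(v) + Σ_{k=1}^N Σ_{n₁+n₂=m_k, n₁,n₂≥1} β_{n₁n₂}·Q^{m'}(v) ] · exp(Σ_{j=1}^N ⟨w_j(v)⟩ x_j) is 𝔓_{[1,M]}-reducible on ℂ^M, where m' = (m₁,…,m_{k−1}, n₁, n₂, m_{k+1},…,m_N). -/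
open scoped BigOperators

/-- The segment `(v_{a+1}, …, v_{a+len})` of a vector `v ∈ ℂ^M` (0-based start `a`);
out-of-range entries (never used below) default to `0`. -/
noncomputable def seg (M a len : ℕ) (v : Fin M → ℂ) : Fin len → ℂ :=
  fun i => if h : a + i.val < M then v ⟨a + i.val, h⟩ else 0

/-- `⟨w⟩ = Σ_i w_i`. -/
noncomputable def sumv {k : ℕ} (w : Fin k → ℂ) : ℂ := ∑ i, w i

/-- `K̃(w) = Σ_i w_i² − (Σ_i w_i)²/k`, the reduced kinetic energy of a cluster. -/
noncomputable def Ktilde (k : ℕ) (w : Fin k → ℂ) : ℂ :=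
  (∑ i, w i ^ 2) - (∑ i, w i) ^ 2 / (k : ℂ)

/-- `V_{n₁n₂}(u) = n₂(u₁+⋯+u_{n₁}) − n₁(u_{n₁+1}+⋯+u_{n₁+n₂})` for `u ∈ ℂ^k`
(`k = n₁ + n₂` in all uses). -/
noncomputable def Vseg (n₁ n₂ k : ℕ) (u : Fin k → ℂ) : ℂ :=
  (n₂ : ℂ) * sumv (seg k 0 n₁ u) - (n₁ : ℂ) * sumv (seg k n₁ n₂ u)

/-- `β_{n₁n₂} = β·√(n₁ n₂ (n₁+n₂))`. -/
noncomputable def betaC (β : ℂ) (n₁ n₂ : ℕ) : ℂ :=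
  β * (Real.sqrt ((n₁ : ℝ) * (n₂ : ℝ) * ((n₁ : ℝ) + (n₂ : ℝ))) : ℂ)

/-- `Q^m(v) = ∏_j Q^{(m_j)}(w_j(v))`, the factorised Ansatz attached to the
composition `m = (m₁, …, m_N)`, where `w_j(v)` is the `j`-th consecutive cluster
of `v` of size `m_j`. -/
noncomputable def Qm (Q : (n : ℕ) → (Fin n → ℂ) → ℂ) (M : ℕ) (m : List ℕ)
    (v : Fin M → ℂ) : ℂ :=
  ∏ j : Fin m.length, Q (m.get j) (seg M ((m.take j.val).sum) (m.get j) v)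

/-- The exponential factor `exp(Σ_j ⟨w_j(v)⟩ x_j)`. -/
noncomputable def expFactor (M : ℕ) (m : List ℕ) (x : Fin m.length → ℝ)
    (v : Fin M → ℂ) : ℂ :=
  Complex.exp (∑ j : Fin m.length,
    sumv (seg M ((m.take j.val).sum) (m.get j) v) * (x j : ℂ))


/-!
Summing over `𝔖_M` amounts to averaging over the cosets of the Young subgroup attached to the
composition. For a split `M = c + L`, `ℙ_{[1,M]}` is `ℙ_{[1,c]} · ℙ_{[c+1,M]}` times the cross
product `∏ P(v_k − v_j)` over the two blocks, and the cross product is invariant under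
`𝔖_c × 𝔖_L`. Hence the antisymmetrised sum of `f(w₁) g(w₂)` over `𝔖_c × 𝔖_L` is the cross product
times `𝔓f(w₁) · 𝔓g(w₂)`, so such a product is reducible as soon as one factor is.
For `m = c :: l` the bulk expression splits as (single-cluster bulk of `c`) `· Q^l` plus
`Q^{(c)} ·` (bulk of `l`), and the exponential factor is a product of functions symmetric within
each cluster; induction on `m`, fed by the single-cluster bulk equation, concludes.
-/

open Equiv

theorem Fintype.sum_eq_zero_of_sum_mul_right_eq_zero {G ι M : Type*} [Group G] [Fintype G]
    [Fintype ι] [Nonempty ι] [AddCommMonoid M] [IsAddTorsionFree M]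
    (T : G → M) (p : ι → G) (h : ∀ g, ∑ i, T (g * p i) = 0) : ∑ g, T g = 0 := by
  have hcard : Fintype.card ι • ∑ g, T g = 0 := calc
    Fintype.card ι • ∑ g, T g = ∑ i : ι, ∑ g, T g := by simp
    _ = ∑ i, ∑ g, T (g * p i) :=
      Finset.sum_congr rfl fun i _ => (Equiv.sum_comp (Equiv.mulRight (p i)) T).symm
    _ = 0 := by rw [Finset.sum_comm]; exact Finset.sum_eq_zero fun g _ => h g
  exact (nsmul_eq_zero_iff.mp hcard).resolve_right Fintype.card_ne_zero

theorem seg_seg (M c L a len : ℕ) (hM : M = c + L) (u : Fin M → ℂ) :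
    seg L a len (seg M c L u) = seg M (c + a) len u := by
  subst hM
  funext i
  simp only [seg]
  by_cases h : a + i.val < L
  · rw [dif_pos h, dif_pos (by omega), dif_pos (by omega)]
    congr 1
    simp only [Fin.ext_iff]
    omega
  · rw [dif_neg h, dif_neg (by omega)]

theorem seg_seg_zero (M c a len : ℕ) (hlen : a + len ≤ c) (hc : c ≤ M) (u : Fin M → ℂ) :
    seg c a len (seg M 0 c u) = seg M a len u := by
  funext i
  simp only [seg]
  rw [dif_pos (by omega), dif_pos (by omega), dif_pos (by omega)]
  simp

theorem seg_zero_eq_comp_castAdd (c L : ℕ) (v : Fin (c + L) → ℂ) :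
    seg (c + L) 0 c v = v ∘ Fin.castAdd L := by
  funext i
  simp only [seg, Function.comp_apply]
  rw [dif_pos (by omega)]
  exact congrArg v (Fin.ext (zero_add _))

theorem seg_eq_comp_natAdd (c L : ℕ) (v : Fin (c + L) → ℂ) :
    seg (c + L) c L v = v ∘ Fin.natAdd c := by
  funext i
  simp [seg, Fin.natAdd]

theorem sumv_comp_perm {n : ℕ} (w : Fin n → ℂ) (σ : Perm (Fin n)) : sumv (w ∘ σ) = sumv w :=
  Equiv.sum_comp σ w

@[to_additive]
theorem prod_segments_cons {R : Type*} [CommMonoid R] {M c L : ℕ} (hM : M = c + L) (l : List ℕ)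
    (F : (j : Fin (l.length + 1)) → (Fin ((c :: l).get j) → ℂ) → R) (v : Fin M → ℂ) :
    ∏ j : Fin (c :: l).length, F j (seg M (((c :: l).take j.val).sum) ((c :: l).get j) v)
      = F 0 (seg M 0 c v)
        * ∏ j : Fin l.length, F j.succ (seg L ((l.take j.val).sum) (l.get j) (seg M c L v)) := by
  refine (Fin.prod_univ_succ (n := l.length) _).trans ?_
  congr 1
  refine Finset.prod_congr rfl fun j _ => ?_
  exact congrArg (F j.succ) (seg_seg M c L _ _ hM v).symm

section Reducibility

variable {β γ : ℂ}

theorem Pop_full (n : ℕ) (g : (Fin n → ℂ) → ℂ) (v : Fin n → ℂ) :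
    Pop β γ n 1 n g v =
      ∑ s : Perm (Fin n), ((Perm.sign s : ℤ) : ℂ) * Pprod β γ n 1 n (v ∘ s) * g (v ∘ s) :=
  Finset.sum_congr rfl fun _ _ => if_pos fun i hi => absurd ⟨by omega, i.isLt⟩ hi

theorem Pprod_full (n : ℕ) (w : Fin n → ℂ) :
    Pprod β γ n 1 n w = ∏ j : Fin n, ∏ k : Fin n, if j < k then Pcub β γ (w k - w j) else 1 := by
  refine Finset.prod_congr rfl fun j _ => Finset.prod_congr rfl fun k _ => ?_
  have hjk : (1 ≤ j.val + 1 ∧ j < k ∧ k.val + 1 ≤ n) ↔ j < k := by omega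
  simp only [hjk]

theorem PReducible.zero (n a b : ℕ) : PReducible β γ n a b fun _ => 0 := by
  intro v
  simp [Pop]

theorem PReducible.add {n a b : ℕ} {f g : (Fin n → ℂ) → ℂ} (hf : PReducible β γ n a b f)
    (hg : PReducible β γ n a b g) : PReducible β γ n a b fun v => f v + g v := by
  intro v
  calc Pop β γ n a b (fun v => f v + g v) v = Pop β γ n a b f v + Pop β γ n a b g v := by
        simp only [Pop, ← Finset.sum_add_distrib]
        refine Finset.sum_congr rfl fun s _ => ?_
        split_ifs <;> ring
    _ = 0 := by rw [hf v, hg v, add_zero]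

theorem PReducible.mul_perm_invariant {n : ℕ} {f e : (Fin n → ℂ) → ℂ}
    (hf : PReducible β γ n 1 n f) (he : ∀ w (σ : Perm (Fin n)), e (w ∘ σ) = e w) :
    PReducible β γ n 1 n fun w => f w * e w := by
  intro v
  have hfv := hf v
  rw [Pop_full] at hfv ⊢
  simp only [he, ← mul_assoc, ← Finset.sum_mul, hfv, zero_mul]

noncomputable def crossProd (β γ : ℂ) {c L : ℕ} (a : Fin c → ℂ) (b : Fin L → ℂ) : ℂ :=
  ∏ i, ∏ j, Pcub β γ (b j - a i)

theorem crossProd_comp_perm {c L : ℕ} (a : Fin c → ℂ) (b : Fin L → ℂ)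
    (σ : Perm (Fin c)) (ρ : Perm (Fin L)) : crossProd β γ (a ∘ σ) (b ∘ ρ) = crossProd β γ a b := by
  simp only [crossProd, Function.comp_apply]
  rw [← Equiv.prod_comp σ (fun i => ∏ j, Pcub β γ (b j - a i))]
  exact Finset.prod_congr rfl fun i _ => Equiv.prod_comp ρ fun j => Pcub β γ (b j - a (σ i))

theorem Pprod_add (c L : ℕ) (w : Fin (c + L) → ℂ) :
    Pprod β γ (c + L) 1 (c + L) w =
      crossProd β γ (w ∘ Fin.castAdd L) (w ∘ Fin.natAdd c)
        * Pprod β γ c 1 c (w ∘ Fin.castAdd L) * Pprod β γ L 1 L (w ∘ Fin.natAdd c) := by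
  have hll : ∀ a b : Fin c, Fin.castAdd L a < Fin.castAdd L b ↔ a < b := fun _ _ => Iff.rfl
  have hlr : ∀ (a : Fin c) (b : Fin L), Fin.castAdd L a < Fin.natAdd c b := fun a b => by
    simp only [Fin.lt_def, Fin.val_castAdd, Fin.val_natAdd]; omega
  have hrl : ∀ (a : Fin L) (b : Fin c), ¬ Fin.natAdd c a < Fin.castAdd L b := fun a b => by
    simp only [Fin.lt_def, Fin.val_castAdd, Fin.val_natAdd]; omega
  simp only [Pprod_full, Fin.prod_univ_add, hll, Fin.natAdd_lt_natAdd_iff, hlr, hrl, if_true,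
    if_false, Finset.prod_const_one, mul_one, Finset.prod_mul_distrib, crossProd,
    Function.comp_apply]
  ring

def blockPerm {c L : ℕ} (σ : Perm (Fin c)) (ρ : Perm (Fin L)) : Perm (Fin (c + L)) :=
  finSumFinEquiv.permCongr (σ.sumCongr ρ)

theorem sign_blockPerm {c L : ℕ} (σ : Perm (Fin c)) (ρ : Perm (Fin L)) :
    Perm.sign (blockPerm σ ρ) = Perm.sign σ * Perm.sign ρ := by
  rw [blockPerm, Perm.sign_permCongr, Perm.sign_sumCongr]

theorem comp_blockPerm_comp_castAdd {c L : ℕ} (v : Fin (c + L) → ℂ) (σ : Perm (Fin c))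
    (ρ : Perm (Fin L)) : (v ∘ blockPerm σ ρ) ∘ Fin.castAdd L = (v ∘ Fin.castAdd L) ∘ σ := by
  funext i
  simp [blockPerm, Equiv.permCongr_apply]

theorem comp_blockPerm_comp_natAdd {c L : ℕ} (v : Fin (c + L) → ℂ) (σ : Perm (Fin c))
    (ρ : Perm (Fin L)) : (v ∘ blockPerm σ ρ) ∘ Fin.natAdd c = (v ∘ Fin.natAdd c) ∘ ρ := by
  funext i
  simp [blockPerm, Equiv.permCongr_apply]

theorem sum_blockPerm {c L : ℕ} (f : (Fin c → ℂ) → ℂ) (g : (Fin L → ℂ) → ℂ) (u : Fin (c + L) → ℂ) :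
    ∑ p : Perm (Fin c) × Perm (Fin L),
        ((Perm.sign (blockPerm p.1 p.2) : ℤ) : ℂ)
          * Pprod β γ (c + L) 1 (c + L) (u ∘ blockPerm p.1 p.2)
          * (f ((u ∘ blockPerm p.1 p.2) ∘ Fin.castAdd L)
            * g ((u ∘ blockPerm p.1 p.2) ∘ Fin.natAdd c))
      = crossProd β γ (u ∘ Fin.castAdd L) (u ∘ Fin.natAdd c)
          * Pop β γ c 1 c f (u ∘ Fin.castAdd L) * Pop β γ L 1 L g (u ∘ Fin.natAdd c) := by
  simp only [Pprod_add, comp_blockPerm_comp_castAdd, comp_blockPerm_comp_natAdd,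
    crossProd_comp_perm, sign_blockPerm, Pop_full, Fintype.sum_prod_type]
  rw [mul_assoc, Finset.sum_mul_sum, Finset.mul_sum]
  refine Finset.sum_congr rfl fun σ _ => ?_
  rw [Finset.mul_sum]
  refine Finset.sum_congr rfl fun ρ _ => ?_
  push_cast
  ring

theorem PReducible.of_blockProduct {M c L : ℕ} (hM : M = c + L) {f : (Fin c → ℂ) → ℂ}
    {g : (Fin L → ℂ) → ℂ} (hfg : ∀ a b, Pop β γ c 1 c f a * Pop β γ L 1 L g b = 0) :
    PReducible β γ M 1 M fun v => f (seg M 0 c v) * g (seg M c L v) := by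
  subst hM
  intro v
  simp only [seg_zero_eq_comp_castAdd, seg_eq_comp_natAdd, Pop_full]
  refine Fintype.sum_eq_zero_of_sum_mul_right_eq_zero _
    (fun p : Perm (Fin c) × Perm (Fin L) => blockPerm p.1 p.2) fun s => ?_
  calc _ = ((Perm.sign s : ℤ) : ℂ) * ∑ p : Perm (Fin c) × Perm (Fin L),
        ((Perm.sign (blockPerm p.1 p.2) : ℤ) : ℂ)
          * Pprod β γ (c + L) 1 (c + L) ((v ∘ s) ∘ blockPerm p.1 p.2)
          * (f (((v ∘ s) ∘ blockPerm p.1 p.2) ∘ Fin.castAdd L)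
            * g (((v ∘ s) ∘ blockPerm p.1 p.2) ∘ Fin.natAdd c)) := by
        rw [Finset.mul_sum]
        refine Finset.sum_congr rfl fun p _ => ?_
        simp only [Perm.coe_mul, map_mul, Int.cast_mul, Units.val_mul, Function.comp_assoc]
        ring
    _ = 0 := by rw [sum_blockPerm, mul_assoc _ (Pop β γ c 1 c f _), hfg, mul_zero, mul_zero]

theorem PReducible.blockProduct_left {M c L : ℕ} (hM : M = c + L) {f : (Fin c → ℂ) → ℂ}
    (hf : PReducible β γ c 1 c f) (g : (Fin L → ℂ) → ℂ) :
    PReducible β γ M 1 M fun v => f (seg M 0 c v) * g (seg M c L v) :=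
  PReducible.of_blockProduct hM fun a _ => by rw [hf a, zero_mul]

theorem PReducible.blockProduct_right {M c L : ℕ} (hM : M = c + L) {g : (Fin L → ℂ) → ℂ}
    (f : (Fin c → ℂ) → ℂ) (hg : PReducible β γ L 1 L g) :
    PReducible β γ M 1 M fun v => f (seg M 0 c v) * g (seg M c L v) :=
  PReducible.of_blockProduct hM fun _ b => by rw [hg b, mul_zero]

end Reducibility

section Composition

variable (β γ : ℂ) (Q : (n : ℕ) → (Fin n → ℂ) → ℂ)

noncomputable def clusterEnergy (c : ℕ) (w : Fin c → ℂ) : ℂ :=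
  Ktilde c w + ((c : ℂ) ^ 3 - (c : ℂ)) * γ

noncomputable def clusterBulk (c : ℕ) (w : Fin c → ℂ) : ℂ :=
  clusterEnergy γ c w * Q c w
    + ∑ n₁ ∈ Finset.Ioo 0 c,
        betaC β n₁ (c - n₁) * Q n₁ (seg c 0 n₁ w) * Q (c - n₁) (seg c n₁ (c - n₁) w)

noncomputable def compositionBulk (M : ℕ) (m : List ℕ) (v : Fin M → ℂ) : ℂ :=
  (∑ j : Fin m.length, clusterEnergy γ (m.get j) (seg M ((m.take j.val).sum) (m.get j) v))
      * Qm Q M m v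
    + ∑ k : Fin m.length, ∑ n₁ ∈ Finset.Ioo 0 (m.get k),
        betaC β n₁ (m.get k - n₁)
          * Qm Q M (m.take k.val ++ [n₁, m.get k - n₁] ++ m.drop (k.val + 1)) v

variable {β γ}

theorem Qm_cons {M c L : ℕ} (hM : M = c + L) (l : List ℕ) (v : Fin M → ℂ) :
    Qm Q M (c :: l) v = Q c (seg M 0 c v) * Qm Q L l (seg M c L v) :=
  prod_segments_cons hM l (fun j w => Q ((c :: l).get j) w) v

theorem Qm_split_cons {M c L n₁ : ℕ} (hM : M = c + L) (hn₁ : n₁ ≤ c) (l : List ℕ)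
    (v : Fin M → ℂ) :
    Qm Q M (n₁ :: (c - n₁) :: l) v
      = Q n₁ (seg c 0 n₁ (seg M 0 c v)) * Q (c - n₁) (seg c n₁ (c - n₁) (seg M 0 c v))
        * Qm Q L l (seg M c L v) := by
  have hM' : M - n₁ = (c - n₁) + L := by omega
  rw [Qm_cons Q (by omega : M = n₁ + (M - n₁)), Qm_cons Q hM', seg_seg M n₁ _ _ _ (by omega),
    seg_seg M n₁ _ _ _ (by omega), seg_seg_zero M c 0 n₁ (by omega) (by omega),
    seg_seg_zero M c n₁ (c - n₁) (by omega) (by omega), add_zero, Nat.add_sub_cancel' hn₁,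
    mul_assoc]

theorem expFactor_cons {M c L : ℕ} (hM : M = c + L) (l : List ℕ) (x : Fin (l.length + 1) → ℝ)
    (v : Fin M → ℂ) :
    expFactor M (c :: l) x v
      = Complex.exp (sumv (seg M 0 c v) * (x 0 : ℂ))
        * expFactor L l (fun j => x j.succ) (seg M c L v) := by
  rw [expFactor, expFactor, ← Complex.exp_add]
  congr 1
  exact sum_segments_cons hM l (fun j w => sumv w * (x j : ℂ)) v

theorem compositionBulk_cons {M c L : ℕ} (hM : M = c + L) (l : List ℕ) (v : Fin M → ℂ) :
    compositionBulk β γ Q M (c :: l) v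
      = clusterBulk β γ Q c (seg M 0 c v) * Qm Q L l (seg M c L v)
        + Q c (seg M 0 c v) * compositionBulk β γ Q L l (seg M c L v) := by
  have henergy : ∑ j : Fin (c :: l).length,
        clusterEnergy γ ((c :: l).get j) (seg M (((c :: l).take j.val).sum) ((c :: l).get j) v)
      = clusterEnergy γ c (seg M 0 c v) + ∑ j : Fin l.length,
          clusterEnergy γ (l.get j) (seg L ((l.take j.val).sum) (l.get j) (seg M c L v)) :=
    sum_segments_cons hM l (fun j w => clusterEnergy γ ((c :: l).get j) w) v
  have hsplit : (∑ k : Fin (c :: l).length, ∑ n₁ ∈ Finset.Ioo 0 ((c :: l).get k),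
        betaC β n₁ ((c :: l).get k - n₁)
          * Qm Q M
              ((c :: l).take k.val ++ [n₁, (c :: l).get k - n₁] ++ (c :: l).drop (k.val + 1)) v)
      = (∑ n₁ ∈ Finset.Ioo 0 c, betaC β n₁ (c - n₁) * Q n₁ (seg c 0 n₁ (seg M 0 c v))
            * Q (c - n₁) (seg c n₁ (c - n₁) (seg M 0 c v))) * Qm Q L l (seg M c L v)
        + Q c (seg M 0 c v) * ∑ k : Fin l.length, ∑ n₁ ∈ Finset.Ioo 0 (l.get k),
            betaC β n₁ (l.get k - n₁)
              * Qm Q L (l.take k.val ++ [n₁, l.get k - n₁] ++ l.drop (k.val + 1))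
                  (seg M c L v) := by
    refine (Fin.sum_univ_succ (n := l.length) _).trans ?_
    congr 1
    · rw [Finset.sum_mul]
      refine Finset.sum_congr rfl fun n₁ hn₁ => ?_
      have hsplitQ := Qm_split_cons Q hM (Finset.mem_Ioo.mp hn₁).2.le l v
      simp only [Fin.val_zero, List.take_zero, List.nil_append, zero_add, List.drop_one,
        List.tail_cons, List.cons_append, List.get_cons_zero] at hsplitQ ⊢
      rw [hsplitQ]
      ring
    · rw [Finset.mul_sum]
      refine Finset.sum_congr rfl fun k _ => ?_
      rw [Finset.mul_sum]
      refine Finset.sum_congr rfl fun n₁ _ => ?_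
      rw [mul_left_comm]
      exact congrArg _ (Qm_cons Q hM _ v)
  rw [compositionBulk, compositionBulk, clusterBulk, henergy, hsplit, Qm_cons Q hM]
  ring

theorem clusterBulk_reducible
    (hbulk : ∀ n : ℕ, 2 ≤ n → PReducible β γ n 1 n (fun v =>
      (Ktilde n v + ((n : ℂ) ^ 3 - (n : ℂ)) * γ) * Q n v
        + β * ∑ n₁ ∈ Finset.Ioo 0 n,
            (Real.sqrt ((n₁ : ℝ) * ((n - n₁ : ℕ) : ℝ) * (n : ℝ)) : ℂ)
              * Q n₁ (seg n 0 n₁ v) * Q (n - n₁) (seg n n₁ (n - n₁) v)))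
    (c : ℕ) : PReducible β γ c 1 c (clusterBulk β γ Q c) := by
  rcases Nat.lt_or_ge c 2 with hc | hc
  · have hzero : clusterBulk β γ Q c = fun _ => 0 := by
      funext w
      have hIoo : Finset.Ioo 0 1 = ∅ := rfl
      interval_cases c <;> simp [clusterBulk, clusterEnergy, Ktilde, hIoo]
    rw [hzero]
    exact PReducible.zero c 1 c
  · convert hbulk c hc using 3 with w
    simp only [clusterBulk, clusterEnergy, Finset.mul_sum]
    congr 1
    refine Finset.sum_congr rfl fun n₁ hn₁ => ?_
    rw [betaC, Nat.cast_sub (Finset.mem_Ioo.mp hn₁).2.le]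
    ring_nf

theorem compositionBulk_mul_expFactor_reducible
    (hcluster : ∀ c, PReducible β γ c 1 c (clusterBulk β γ Q c)) (m : List ℕ)
    (x : Fin m.length → ℝ) :
    PReducible β γ m.sum 1 m.sum fun v =>
      compositionBulk β γ Q m.sum m v * expFactor m.sum m x v := by
  induction m with
  | nil =>
    simpa [compositionBulk] using PReducible.zero (β := β) (γ := γ) 0 1 0
  | cons c l ih =>
    set e : (Fin c → ℂ) → ℂ := fun w => Complex.exp (sumv w * (x 0 : ℂ))
    have he : ∀ w (σ : Perm (Fin c)), e (w ∘ σ) = e w := fun w σ => by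
      simp only [e, sumv_comp_perm]
    have hsplit : (fun v => compositionBulk β γ Q (c :: l).sum (c :: l) v * expFactor _ _ x v)
        = fun v => (clusterBulk β γ Q c (seg (c :: l).sum 0 c v) * e (seg (c :: l).sum 0 c v))
              * (Qm Q l.sum l (seg (c :: l).sum c l.sum v)
                * expFactor l.sum l (fun j => x j.succ) (seg (c :: l).sum c l.sum v))
            + (Q c (seg (c :: l).sum 0 c v) * e (seg (c :: l).sum 0 c v))
              * (compositionBulk β γ Q l.sum l (seg (c :: l).sum c l.sum v)
                * expFactor l.sum l (fun j => x j.succ) (seg (c :: l).sum c l.sum v)) := by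
      funext v
      rw [compositionBulk_cons Q List.sum_cons, expFactor_cons List.sum_cons]
      ring
    rw [hsplit]
    refine PReducible.add ?_ ?_
    · exact ((hcluster c).mul_perm_invariant he).blockProduct_left List.sum_cons
        fun w => Qm Q l.sum l w * expFactor l.sum l (fun j => x j.succ) w
    · exact (ih fun j => x j.succ).blockProduct_right List.sum_cons
        fun w => Q c w * e w

end Composition

theorem stmt_17_general (M : ℕ) (β γ : ℂ)
    (Q : (n : ℕ) → (Fin n → ℂ) → ℂ)
    (hbulk : ∀ n : ℕ, 2 ≤ n → PReducible β γ n 1 n (fun v =>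
      (Ktilde n v + ((n : ℂ) ^ 3 - (n : ℂ)) * γ) * Q n v
        + β * ∑ n₁ ∈ Finset.Ioo 0 n,
            (Real.sqrt ((n₁ : ℝ) * ((n - n₁ : ℕ) : ℝ) * (n : ℝ)) : ℂ)
              * Q n₁ (seg n 0 n₁ v) * Q (n - n₁) (seg n n₁ (n - n₁) v))) :
    ∀ (m : List ℕ), (∀ x ∈ m, 0 < x) → m.sum = M →
    ∀ x : Fin m.length → ℝ,
    PReducible β γ M 1 M (fun v =>
      ((∑ j : Fin m.length,
          (Ktilde (m.get j) (seg M ((m.take j.val).sum) (m.get j) v)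
            + ((m.get j : ℂ) ^ 3 - (m.get j : ℂ)) * γ)) * Qm Q M m v
        + ∑ k : Fin m.length, ∑ n₁ ∈ Finset.Ioo 0 (m.get k),
            betaC β n₁ (m.get k - n₁)
              * Qm Q M (m.take k.val ++ [n₁, m.get k - n₁] ++ m.drop (k.val + 1)) v)
      * expFactor M m x v) := by
  rintro m - rfl x
  exact compositionBulk_mul_expFactor_reducible Q (clusterBulk_reducible Q hbulk) m x

theorem stmt_17 (M : ℕ) (hM : 1 ≤ M) (β γ : ℂ)
    (Q : (n : ℕ) → (Fin n → ℂ) → ℂ)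
    (hQpoly : ∀ n : ℕ, ∃ p : MvPolynomial (Fin n) ℂ, ∀ v, Q n v = MvPolynomial.eval v p)
    (hQ1 : ∀ v : Fin 1 → ℂ, Q 1 v = 1)
    (hbulk : ∀ n : ℕ, 2 ≤ n → PReducible β γ n 1 n (fun v =>
      (Ktilde n v + ((n : ℂ) ^ 3 - (n : ℂ)) * γ) * Q n v
        + β * ∑ n₁ ∈ Finset.Ioo 0 n,
            (Real.sqrt ((n₁ : ℝ) * ((n - n₁ : ℕ) : ℝ) * (n : ℝ)) : ℂ)
              * Q n₁ (seg n 0 n₁ v) * Q (n - n₁) (seg n n₁ (n - n₁) v)))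
    (hjump : ∀ n₁ n₂ : ℕ, 1 ≤ n₁ → 1 ≤ n₂ → PReducible β γ (n₁ + n₂) 1 (n₁ + n₂) (fun v =>
      Vseg n₁ n₂ (n₁ + n₂) v * Q n₁ (seg (n₁ + n₂) 0 n₁ v) * Q n₂ (seg (n₁ + n₂) n₁ n₂ v)
        + Vseg n₂ n₁ (n₁ + n₂) v * Q n₂ (seg (n₁ + n₂) 0 n₂ v)
            * Q n₁ (seg (n₁ + n₂) n₂ n₁ v)
        + 2 * (n₁ : ℂ) * (n₂ : ℂ) * betaC β n₁ n₂ * Q (n₁ + n₂) v)) :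
    ∀ (m : List ℕ), (∀ x ∈ m, 0 < x) → m.sum = M →
    ∀ x : Fin m.length → ℝ,
    PReducible β γ M 1 M (fun v =>
      ((∑ j : Fin m.length,
          (Ktilde (m.get j) (seg M ((m.take j.val).sum) (m.get j) v)
            + ((m.get j : ℂ) ^ 3 - (m.get j : ℂ)) * γ)) * Qm Q M m v
        + ∑ k : Fin m.length, ∑ n₁ ∈ Finset.Ioo 0 (m.get k),
            betaC β n₁ (m.get k - n₁)
              * Qm Q M (m.take k.val ++ [n₁, m.get k - n₁] ++ m.drop (k.val + 1)) v)
      * expFactor M m x v) :=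
  stmt_17_general M β γ Q hbulk
end
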